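/- arXiv:2101.09871 — 8 statements merged into one kernel-verified Lean document; each statement's English description precedes it below -/
import Mathlib

section
/- Suppose the real sequence (a_n) satisfies the trie recurrence with toll-sequence (b_n) such that b_n ≥ 0 for all n ≥ 2 and b_{n_0} > 0 for at least one n_0 ≥ 2. Then a_n = Ω(n^ρ), i.e. there are a constant c > 0 and N such that a_n ≥ c·n^ρ for all n ≥ N. -/
/-!
A comparison argument. The operator `trieOp M p f n = M ∑_j E f(Bin(n, p_j))` is positive and
its diagonal coefficient `M ∑_j p_j ^ n` is `< 1` for `n ≥ 2`, so a solution `a` with nonnegative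
tolls dominates every function that is eventually a subsolution (`g ≤ trieOp g`) and lies below
`a` up to that point.

The test function `g k = k ^ ρ + √k - T` is eventually a subsolution. By Jensen,
`E Bin(n, p)^ρ ≥ (n p)^ρ`, and `M ∑_j p_j ^ ρ = 1`, so the `k ^ ρ` part reproduces itself. A
second-order lower bound for the square root gives `E √Bin(n, p) ≥ √(n p) - O(1)`, and since
`ρ > 1/2` the factor `M ∑_j √p_j` exceeds `1`, so the `√k` part gains a multiple of `√n`, which
absorbs the constants. Taking `T` so large that `g ≤ 0` wherever `a` may vanish, and `c > 0` small
for the finitely many remaining indices, gives `a ≥ c g ≥ (c / 2) n ^ ρ` eventually.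
-/

open Finset Real Filter Topology

namespace TrieRecurrence

noncomputable def binomWeight (p : ℝ) (n k : ℕ) : ℝ := n.choose k * p ^ k * (1 - p) ^ (n - k)

section BinomialMoments

open Polynomial

variable {p : ℝ}

theorem binomWeight_eq_eval (p : ℝ) (n k : ℕ) :
    binomWeight p n k = (bernsteinPolynomial ℝ n k).eval p := by
  simp [binomWeight, bernsteinPolynomial]

theorem binomWeight_nonneg (hp0 : 0 ≤ p) (hp1 : p ≤ 1) (n k : ℕ) : 0 ≤ binomWeight p n k := by
  have : 0 ≤ 1 - p := sub_nonneg.2 hp1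
  unfold binomWeight; positivity

theorem binomWeight_pos (hp0 : 0 < p) (hp1 : p < 1) {n k : ℕ} (hkn : k ≤ n) :
    0 < binomWeight p n k := by
  have : 0 < 1 - p := sub_pos.2 hp1
  have : (0 : ℝ) < n.choose k := by exact_mod_cast Nat.choose_pos hkn
  unfold binomWeight; positivity

theorem binomWeight_self (p : ℝ) (n : ℕ) : binomWeight p n n = p ^ n := by
  simp [binomWeight]

theorem sum_binomWeight (p : ℝ) (n : ℕ) : ∑ k ∈ range (n + 1), binomWeight p n k = 1 := by
  simpa [binomWeight_eq_eval, eval_finsetSum] using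
    congrArg (eval p) (bernsteinPolynomial.sum ℝ n)

theorem sum_binomWeight_mul (p : ℝ) (n : ℕ) :
    ∑ k ∈ range (n + 1), binomWeight p n k * k = n * p := by
  simpa [binomWeight_eq_eval, eval_finsetSum, mul_comm] using
    congrArg (eval p) (bernsteinPolynomial.sum_smul ℝ n)

theorem sum_binomWeight_mul_sq (p : ℝ) (n : ℕ) :
    ∑ k ∈ range (n + 1), binomWeight p n k * (k - n * p) ^ 2 = n * p * (1 - p) := by
  have := congrArg (eval p) (bernsteinPolynomial.variance (R := ℝ) n)
  simp only [eval_finsetSum, eval_mul, eval_pow, eval_sub, eval_X, eval_natCast, eval_one,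
    nsmul_eq_mul] at this
  rw [← this]
  refine sum_congr rfl fun k _ => ?_
  rw [binomWeight_eq_eval]; ring

theorem rpow_le_sum_binomWeight_mul_rpow (hp0 : 0 ≤ p) (hp1 : p ≤ 1) {ρ : ℝ} (hρ : 1 ≤ ρ)
    (n : ℕ) : ((n : ℝ) * p) ^ ρ ≤ ∑ k ∈ range (n + 1), binomWeight p n k * (k : ℝ) ^ ρ := by
  simpa [smul_eq_mul, sum_binomWeight_mul] using (convexOn_rpow hρ).map_sum_le
    (fun k _ => binomWeight_nonneg hp0 hp1 n k) (sum_binomWeight p n)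
    (fun k _ => Set.mem_Ici.2 (Nat.cast_nonneg k))

theorem sqrt_mul_quadratic_le_sqrt {m x : ℝ} (hm : 0 < m) (hx : 0 ≤ x) :
    √m * (1 + (x - m) / (2 * m) - (x - m) ^ 2 / (2 * m ^ 2)) ≤ √x := by
  obtain ⟨s, hs, rfl⟩ : ∃ s, 0 ≤ s ∧ s ^ 2 = x := ⟨√x, sqrt_nonneg x, sq_sqrt hx⟩
  obtain ⟨t, ht, rfl⟩ : ∃ t, 0 < t ∧ t ^ 2 = m := ⟨√m, sqrt_pos.2 hm, sq_sqrt hm.le⟩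
  rw [sqrt_sq hs, sqrt_sq ht.le, ← sub_nonneg]
  have key : s - t * (1 + (s ^ 2 - t ^ 2) / (2 * t ^ 2) - (s ^ 2 - t ^ 2) ^ 2 / (2 * (t ^ 2) ^ 2))
      = (s - t) ^ 2 * s * (s + 2 * t) / (2 * t ^ 3) := by
    field_simp; ring
  rw [key]; positivity

theorem sqrt_sub_le_sum_binomWeight_mul_sqrt (hp0 : 0 ≤ p) (hp1 : p ≤ 1) {n : ℕ}
    (hm : 0 < n * p) :
    √(n * p) - 1 / (2 * √(n * p)) ≤ ∑ k ∈ range (n + 1), binomWeight p n k * √k := by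
  have hmean := sum_binomWeight_mul p n
  have hvar := sum_binomWeight_mul_sq p n
  set m : ℝ := n * p
  have expand : ∀ k : ℕ,
      binomWeight p n k * (√m * (1 + (k - m) / (2 * m) - (k - m) ^ 2 / (2 * m ^ 2))) =
        √m / 2 * binomWeight p n k + √m / (2 * m) * (binomWeight p n k * k) -
          √m / (2 * m ^ 2) * (binomWeight p n k * (k - m) ^ 2) := by
    intro k; field_simp; ring
  calc √m - 1 / (2 * √m) ≤ √m - (1 - p) / (2 * √m) := by gcongr; linarith
    _ = ∑ k ∈ range (n + 1),
          binomWeight p n k * (√m * (1 + (k - m) / (2 * m) - (k - m) ^ 2 / (2 * m ^ 2))) := by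
      simp only [expand, sum_add_distrib, sum_sub_distrib, ← mul_sum, sum_binomWeight, hmean,
        hvar]
      field_simp
      rw [sq_sqrt hm.le]
      ring
    _ ≤ ∑ k ∈ range (n + 1), binomWeight p n k * √k :=
      sum_le_sum fun k _ => mul_le_mul_of_nonneg_left
        (sqrt_mul_quadratic_le_sqrt hm k.cast_nonneg) (binomWeight_nonneg hp0 hp1 n k)

theorem rpow_add_sqrt_sub_le_sum_binomWeight (hp0 : 0 < p) (hp1 : p ≤ 1) {ρ : ℝ} (hρ : 1 ≤ ρ)
    (T : ℝ) {n : ℕ} (hn : 1 ≤ n) :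
    (n : ℝ) ^ ρ * p ^ ρ + √n * √p - (1 / (2 * √p) + T) ≤
      ∑ k ∈ range (n + 1), binomWeight p n k * ((k : ℝ) ^ ρ + √k - T) := by
  have hn' : (1 : ℝ) ≤ n := by exact_mod_cast hn
  have hrpow := rpow_le_sum_binomWeight_mul_rpow hp0.le hp1 hρ n
  have hsqrt := sqrt_sub_le_sum_binomWeight_mul_sqrt hp0.le hp1 (n := n) (by positivity)
  have herr : 1 / (2 * √(n * p)) ≤ 1 / (2 * √p) := by
    gcongr
    exact le_mul_of_one_le_left hp0.le hn'
  rw [mul_rpow n.cast_nonneg hp0.le] at hrpow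
  rw [sqrt_mul n.cast_nonneg] at hsqrt herr
  simp only [mul_sub, mul_add, sum_add_distrib, sum_sub_distrib, ← sum_mul, sum_binomWeight,
    one_mul]
  linarith

end BinomialMoments

section PowerSums

variable {ι : Type*} [Fintype ι]

theorem sum_rpow_lt_sum_rpow [Nonempty ι] {p : ι → ℝ}
    (hp0 : ∀ j, 0 < p j) (hp1 : ∀ j, p j < 1) {r s : ℝ} (hrs : r < s) :
    ∑ j, p j ^ s < ∑ j, p j ^ r :=
  sum_lt_sum_of_nonempty univ_nonempty fun j _ => rpow_lt_rpow_of_exponent_gt (hp0 j) (hp1 j) hrs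

theorem one_le_of_sum_rpow_le_one [Nonempty ι] {p : ι → ℝ}
    (hp0 : ∀ j, 0 < p j) (hp1 : ∀ j, p j < 1) (hpsum : ∑ j, p j = 1) {ρ : ℝ}
    (hρ : ∑ j, p j ^ ρ ≤ 1) : 1 ≤ ρ := by
  by_contra! h
  simpa [hpsum] using (sum_rpow_lt_sum_rpow hp0 hp1 h).trans_le hρ

theorem one_lt_mul_sum_sqrt [Nonempty ι] {p : ι → ℝ} {M ρ : ℝ} (hM : 0 < M)
    (hp0 : ∀ j, 0 < p j) (hp1 : ∀ j, p j < 1) (hρ : 1 / 2 < ρ) (hMρ : M * ∑ j, p j ^ ρ = 1) :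
    1 < M * ∑ j, √(p j) := by
  have := sum_rpow_lt_sum_rpow hp0 hp1 hρ
  simp only [← sqrt_eq_rpow] at this
  rw [← hMρ]
  gcongr

theorem mul_sum_pow_lt_one {p : ι → ℝ} {M : ℝ} (hM : 0 ≤ M) (hp0 : ∀ j, 0 ≤ p j)
    (hp1 : ∀ j, p j ≤ 1) (hp2 : M * ∑ j, p j ^ 2 < 1) {n : ℕ} (hn : 2 ≤ n) :
    M * ∑ j, p j ^ n < 1 :=
  (mul_le_mul_of_nonneg_left (sum_le_sum fun j _ => pow_le_pow_of_le_one (hp0 j) (hp1 j) hn)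
    hM).trans_lt hp2

end PowerSums

theorem exists_pos_forall_mul_le {α : Type*} (s : Finset α) {f g : α → ℝ}
    (hf : ∀ k ∈ s, 0 < f k) : ∃ c > 0, ∀ k ∈ s, c * g k ≤ f k := by
  have : ∀ᶠ c in 𝓝[>] (0 : ℝ), ∀ k ∈ s, c * g k ≤ f k := by
    refine (eventually_all_finset s).2 fun k hk => ?_
    have : Tendsto (fun c : ℝ => c * g k) (𝓝[>] 0) (𝓝 0) := by
      simpa using (tendsto_id.mul_const (g k)).mono_left (nhdsWithin_le_nhds (a := (0 : ℝ)))
    exact (this.eventually (gt_mem_nhds (hf k hk))).mono fun c hc => hc.le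
  obtain ⟨c, hc, hc0⟩ := (this.and self_mem_nhdsWithin).exists
  exact ⟨c, hc0, hc⟩

noncomputable def trieOp {ι : Type*} [Fintype ι] (M : ℝ) (p : ι → ℝ) (f : ℕ → ℝ) (n : ℕ) : ℝ :=
  M * ∑ j, ∑ k ∈ range (n + 1), binomWeight (p j) n k * f k

section TrieOperator

variable {ι : Type*} [Fintype ι] {M : ℝ} {p : ι → ℝ}

theorem trieOp_eq_add_diag (f : ℕ → ℝ) (n : ℕ) :
    trieOp M p f n =
      M * ∑ j, ∑ k ∈ range n, binomWeight (p j) n k * f k + M * (∑ j, p j ^ n) * f n := by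
  simp only [trieOp, sum_range_succ, binomWeight_self, sum_add_distrib, ← sum_mul]
  ring

theorem trieOp_const_mul (c : ℝ) (f : ℕ → ℝ) (n : ℕ) :
    trieOp M p (fun k => c * f k) n = c * trieOp M p f n := by
  simp only [trieOp, mul_sum, mul_left_comm c]

theorem trieOp_nonneg (hM : 0 ≤ M) (hp0 : ∀ j, 0 ≤ p j) (hp1 : ∀ j, p j ≤ 1) {f : ℕ → ℝ}
    (hf : ∀ k, 0 ≤ f k) (n : ℕ) : 0 ≤ trieOp M p f n :=
  mul_nonneg hM <| sum_nonneg fun j _ => sum_nonneg fun k _ =>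
    mul_nonneg (binomWeight_nonneg (hp0 j) (hp1 j) n k) (hf k)

theorem trieOp_pos [Nonempty ι] (hM : 0 < M) (hp0 : ∀ j, 0 < p j) (hp1 : ∀ j, p j < 1)
    {f : ℕ → ℝ} (hf : ∀ k, 0 ≤ f k) {k n : ℕ} (hkn : k ≤ n) (hk : 0 < f k) :
    0 < trieOp M p f n :=
  mul_pos hM <| sum_pos (fun j _ => sum_pos'
    (fun i _ => mul_nonneg (binomWeight_nonneg (hp0 j).le (hp1 j).le n i) (hf i))
    ⟨k, mem_range.2 (Nat.lt_succ_of_le hkn), mul_pos (binomWeight_pos (hp0 j) (hp1 j) hkn) hk⟩)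
    univ_nonempty

theorem le_of_le_trieOp (hM : 0 ≤ M) (hp0 : ∀ j, 0 ≤ p j) (hp1 : ∀ j, p j ≤ 1)
    {a b g : ℕ → ℝ} {N : ℕ} (hσ : ∀ n > N, M * ∑ j, p j ^ n < 1)
    (ha : ∀ n > N, a n = trieOp M p a n + b n) (hb : ∀ n > N, 0 ≤ b n)
    (hg : ∀ n > N, g n ≤ trieOp M p g n) (hbase : ∀ n ≤ N, g n ≤ a n) (n : ℕ) : g n ≤ a n := by
  induction n using Nat.strong_induction_on with
  | _ n ih =>
  rcases le_or_gt n N with hn | hn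
  · exact hbase n hn
  have hlow : M * ∑ j, ∑ k ∈ range n, binomWeight (p j) n k * g k ≤
      M * ∑ j, ∑ k ∈ range n, binomWeight (p j) n k * a k := by
    gcongr with j _ k hk
    · exact binomWeight_nonneg (hp0 j) (hp1 j) n k
    · exact ih k (mem_range.1 hk)
  have hgn := hg n hn
  have han := ha n hn
  rw [trieOp_eq_add_diag] at hgn han
  nlinarith [hσ n hn, hb n hn]

theorem pos_of_eq_trieOp_add [Nonempty ι] (hM : 0 < M) (hp0 : ∀ j, 0 < p j)
    (hp1 : ∀ j, p j < 1) {a b : ℕ → ℝ} (ha : ∀ n ≥ 2, a n = trieOp M p a n + b n)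
    (ha_nonneg : ∀ n, 0 ≤ a n) (hb : ∀ n ≥ 2, 0 ≤ b n) {n₀ : ℕ} (hn₀ : 2 ≤ n₀)
    (hbn₀ : 0 < b n₀) (n : ℕ) (hn : n₀ ≤ n) : 0 < a n := by
  have han₀ : 0 < a n₀ := by
    rw [ha n₀ hn₀]
    linarith [trieOp_nonneg hM.le (fun j => (hp0 j).le) (fun j => (hp1 j).le) ha_nonneg n₀]
  rw [ha n (hn₀.trans hn)]
  linarith [trieOp_pos hM hp0 hp1 ha_nonneg hn han₀, hb n (hn₀.trans hn)]

theorem exists_pos_mul_le_of_eventually_le_trieOp (hM : 0 ≤ M) (hp0 : ∀ j, 0 ≤ p j)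
    (hp1 : ∀ j, p j ≤ 1) {a b g : ℕ → ℝ} {n₀ : ℕ} (hσ : ∀ n > n₀, M * ∑ j, p j ^ n < 1)
    (ha : ∀ n > n₀, a n = trieOp M p a n + b n) (hb : ∀ n > n₀, 0 ≤ b n)
    (ha_pos : ∀ n > n₀, 0 < a n) (hbase : ∀ n ≤ n₀, g n ≤ 0 ∧ 0 ≤ a n)
    (hg : ∀ᶠ n in atTop, g n ≤ trieOp M p g n) : ∃ c > 0, ∀ n, c * g n ≤ a n := by
  obtain ⟨N, hN⟩ := eventually_atTop.1 hg
  obtain ⟨c, hc, hca⟩ := exists_pos_forall_mul_le (Ioc n₀ N) (g := g)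
    fun k hk => ha_pos k (mem_Ioc.1 hk).1
  refine ⟨c, hc, le_of_le_trieOp (N := max n₀ N) hM hp0 hp1
    (fun n hn => hσ n (max_lt_iff.1 hn).1) (fun n hn => ha n (max_lt_iff.1 hn).1)
    (fun n hn => hb n (max_lt_iff.1 hn).1) (fun n hn => ?_) (fun n hn => ?_)⟩
  · rw [trieOp_const_mul]
    exact mul_le_mul_of_nonneg_left (hN n (max_lt_iff.1 hn).2.le) hc.le
  · rcases le_or_gt n n₀ with h | h
    · exact (mul_nonpos_of_nonneg_of_nonpos hc.le (hbase n h).1).trans (hbase n h).2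
    · exact hca n (mem_Ioc.2 ⟨h, by omega⟩)

theorem eventually_le_trieOp_rpow_add_sqrt_sub (hM : 0 ≤ M) (hp0 : ∀ j, 0 < p j)
    (hp1 : ∀ j, p j ≤ 1) {ρ : ℝ} (hρ : 1 ≤ ρ) (hMρ : M * ∑ j, p j ^ ρ = 1)
    (hsqrt : 1 < M * ∑ j, √(p j)) (T : ℝ) :
    ∀ᶠ n : ℕ in atTop, (n : ℝ) ^ ρ + √n - T ≤ trieOp M p (fun k => (k : ℝ) ^ ρ + √k - T) n := by
  have hlow : ∀ n : ℕ, 1 ≤ n → (n : ℝ) ^ ρ + √n * (M * ∑ j, √(p j)) -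
      M * ∑ j, (1 / (2 * √(p j)) + T) ≤ trieOp M p (fun k => (k : ℝ) ^ ρ + √k - T) n :=
    fun n hn => calc
      _ = M * ∑ j, ((n : ℝ) ^ ρ * p j ^ ρ + √n * √(p j) - (1 / (2 * √(p j)) + T)) := by
        simp only [sum_add_distrib, sum_sub_distrib, ← mul_sum]
        linear_combination -(n : ℝ) ^ ρ * hMρ
      _ ≤ _ := by
        unfold trieOp
        gcongr with j
        exact rpow_add_sqrt_sub_le_sum_binomWeight (hp0 j) (hp1 j) hρ T hn
  have hδ : 0 < M * ∑ j, √(p j) - 1 := sub_pos.2 hsqrt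
  filter_upwards [eventually_ge_atTop 1,
    (tendsto_sqrt_atTop.comp tendsto_natCast_atTop_atTop).eventually_ge_atTop
      ((M * ∑ j, (1 / (2 * √(p j)) + T) - T) / (M * ∑ j, √(p j) - 1))] with n hn hsq
  rw [Function.comp_apply, div_le_iff₀ hδ] at hsq
  linarith [hlow n hn]

end TrieOperator

end TrieRecurrence

open TrieRecurrence

theorem trie_recurrence_lower_bound_general
    {M A : ℕ} (hM : 1 ≤ M)
    (p : Fin A → ℝ) (hp0 : ∀ j, 0 < p j) (hp1 : ∀ j, p j < 1)
    (hpsum : ∑ j, p j = 1)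
    (hnonexp : ∑ j, (p j) ^ 2 < 1 / (M : ℝ))
    (ρ : ℝ) (hρ : ∑ j, (p j) ^ ρ = 1 / (M : ℝ))
    (a b : ℕ → ℝ) (ha0 : a 0 = 0) (ha1 : a 1 = 0)
    (hrec : ∀ n, 2 ≤ n → a n = (M : ℝ) * ∑ j, ∑ k ∈ Finset.range (n + 1),
        (n.choose k : ℝ) * p j ^ k * (1 - p j) ^ (n - k) * a k + b n)
    (hb0 : ∀ n, 2 ≤ n → 0 ≤ b n)
    (hbpos : ∃ n₀, 2 ≤ n₀ ∧ 0 < b n₀) :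
    ∃ c : ℝ, 0 < c ∧ ∃ N : ℕ, ∀ n ≥ N, c * (n : ℝ) ^ ρ ≤ a n := by
  have : Nonempty (Fin A) :=
    univ_nonempty_iff.1 (nonempty_of_sum_ne_zero (hpsum ▸ one_ne_zero))
  have hM0 : (0 : ℝ) < M := by exact_mod_cast hM
  have hp0' : ∀ j, 0 ≤ p j := fun j => (hp0 j).le
  have hp1' : ∀ j, p j ≤ 1 := fun j => (hp1 j).le
  have hMρ : (M : ℝ) * ∑ j, p j ^ ρ = 1 := by rw [hρ]; field_simp
  have hσ : ∀ n ≥ 2, (M : ℝ) * ∑ j, p j ^ n < 1 :=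
    fun n => mul_sum_pow_lt_one hM0.le hp0' hp1' (by rwa [lt_div_iff₀' hM0] at hnonexp)
  have hρ1 : 1 ≤ ρ := one_le_of_sum_rpow_le_one hp0 hp1 hpsum <| by
    rw [hρ]; exact div_le_one_of_le₀ (by exact_mod_cast hM) hM0.le
  obtain ⟨n₀, hn₀, hbn₀⟩ := hbpos
  have ha_nonneg : ∀ n, 0 ≤ a n := le_of_le_trieOp (g := 0) (N := 1) hM0.le hp0' hp1' hσ hrec hb0
    (fun n _ => by simp [trieOp]) (fun n hn => by interval_cases n <;> simp [ha0, ha1])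
  have ha_pos := pos_of_eq_trieOp_add hM0 hp0 hp1 hrec ha_nonneg hb0 hn₀ hbn₀
  set T := (n₀ : ℝ) ^ ρ + √n₀
  have hT : ∀ n ≤ n₀, (n : ℝ) ^ ρ + √n - T ≤ 0 := fun n hn => by
    have hcast : (n : ℝ) ≤ n₀ := by exact_mod_cast hn
    linarith [rpow_le_rpow n.cast_nonneg hcast (by linarith : 0 ≤ ρ), sqrt_le_sqrt hcast]
  obtain ⟨c, hc, hca⟩ := exists_pos_mul_le_of_eventually_le_trieOp hM0.le hp0' hp1'
    (fun n hn => hσ n (by omega)) (fun n hn => hrec n (by omega)) (fun n hn => hb0 n (by omega))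
    (fun n hn => ha_pos n hn.le) (fun n hn => ⟨hT n hn, ha_nonneg n⟩)
    (eventually_le_trieOp_rpow_add_sqrt_sub hM0.le hp0 hp1' hρ1 hMρ
      (one_lt_mul_sum_sqrt hM0 hp0 hp1 (by linarith) hMρ) T)
  have hgrow : Tendsto (fun n : ℕ => (n : ℝ) ^ ρ) atTop atTop :=
    (tendsto_rpow_atTop (by linarith)).comp tendsto_natCast_atTop_atTop
  obtain ⟨N, hN⟩ := eventually_atTop.1 (hgrow.eventually_ge_atTop (2 * T))
  refine ⟨c / 2, by positivity, N, fun n hn => le_trans ?_ (hca n)⟩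
  nlinarith [hN n hn, sqrt_nonneg (n : ℝ)]

/-- **Lower bound for the trie recurrence** (Proposition 3, Schachinger).
If `(a_n)` satisfies the trie recurrence
`a_n = M ∑_j ∑_k C(n,k) p_j^k (1-p_j)^{n-k} a_k + b_n` with `a_0 = a_1 = 0`,
where `b_n ≥ 0` for `n ≥ 2` and `b_{n₀} > 0` for some `n₀ ≥ 2`, then `a_n = Ω(n^ρ)`. -/
theorem trie_recurrence_lower_bound
    {M A : ℕ} (hM : 1 ≤ M) (hA : 2 ≤ A)
    (p : Fin A → ℝ) (hp0 : ∀ j, 0 < p j) (hp1 : ∀ j, p j < 1)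
    (hpsum : ∑ j, p j = 1)
    (hnonexp : ∑ j, (p j) ^ 2 < 1 / (M : ℝ))
    (ρ : ℝ) (hρ : ∑ j, (p j) ^ ρ = 1 / (M : ℝ))
    (a b : ℕ → ℝ) (ha0 : a 0 = 0) (ha1 : a 1 = 0)
    (hrec : ∀ n, 2 ≤ n → a n = (M : ℝ) * ∑ j, ∑ k ∈ Finset.range (n + 1),
        (n.choose k : ℝ) * p j ^ k * (1 - p j) ^ (n - k) * a k + b n)
    (hb0 : ∀ n, 2 ≤ n → 0 ≤ b n)
    (hbpos : ∃ n₀, 2 ≤ n₀ ∧ 0 < b n₀) :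
    ∃ c : ℝ, 0 < c ∧ ∃ N : ℕ, ∀ n ≥ N, c * (n : ℝ) ^ ρ ≤ a n :=
  trie_recurrence_lower_bound_general hM p hp0 hp1 hpsum hnonexp ρ hρ a b ha0 ha1 hrec hb0 hbpos
end

section
/- Asymptotic transfer for the trie recurrence, large toll-sequence case: suppose the real sequence (a_n) satisfies the trie recurrence with toll-sequence (b_n) where b_n = c·n^α + o(n^α) as n → ∞ for some real constant c and some real α > ρ. Then a_n = c·n^α/P(α) + o(n^α) as n → ∞, where P(α) = 1 - M Σ_{j=1}^A p_j^α (which is positive since α > ρ). -/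
/-!
The map `s ↦ M ∑ p_j^s` decreases strictly, from `M ≥ 1` at `s = 1` to `1` at `s = ρ`, so `ρ ≥ 1`
and `M ∑ p_j^s < 1` for `s > ρ`. Put `d_n = a_n - c n^α / P(α)`. A `Bin(n, p)` variable `K` stays
within `O(√n)` of `pn` on average, so `𝔼 K^s = (pn)^s + O(n^{s - 1/2})` and `d` satisfies the trie
recurrence with a toll that is `o(n^α)`. For `ρ < β < α` this makes `ε n^α + C n^β` a supersolution
of the recurrence for large `n`, and comparing `d` with it gives `|d_n| ≤ ε n^α + C n^β` for every
`ε > 0`, i.e. `d_n = o(n^α)`.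
-/

open Filter Asymptotics Finset

lemma isLittleO_natCast_rpow_rpow {β α : ℝ} (h : β < α) :
    (fun n : ℕ => (n : ℝ) ^ β) =o[atTop] fun n : ℕ => (n : ℝ) ^ α := by
  have hdecay : (fun n : ℕ => (n : ℝ) ^ (β - α)) =o[atTop] fun _ => (1 : ℝ) := by
    have := tendsto_rpow_neg_atTop (sub_pos.2 h)
    rw [neg_sub] at this
    exact (isLittleO_one_iff ℝ).2 (this.comp tendsto_natCast_atTop_atTop)
  refine (hdecay.mul_isBigO (isBigO_refl (fun n : ℕ => (n : ℝ) ^ α) atTop)).congr' ?_ ?_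
  · filter_upwards [eventually_gt_atTop 0] with n hn
    rw [← Real.rpow_add (by exact_mod_cast hn), sub_add_cancel]
  · simp

lemma isLittleO_of_forall_le_add {α E F G : Type*} [Norm E] [SeminormedAddCommGroup F]
    [SeminormedAddCommGroup G] {l : Filter α} {f : α → E} {g : α → F} {h : α → G} (hh : h =o[l] g)
    (H : ∀ ε > 0, ∃ C, ∀ᶠ x in l, ‖f x‖ ≤ ε * ‖g x‖ + C * ‖h x‖) : f =o[l] g := by
  refine isLittleO_iff.2 fun ε hε => ?_
  obtain ⟨C, hC⟩ := H (ε / 2) (half_pos hε)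
  filter_upwards [hC, (hh.norm_left.const_mul_left C).bound (half_pos hε)] with x hfx hhx
  linarith [(Real.le_norm_self (C * ‖h x‖)).trans hhx]

lemma abs_rpow_sub_rpow_le {s x y b : ℝ} (hs : 1 ≤ s) (hx : x ∈ Set.Icc 0 b)
    (hy : y ∈ Set.Icc 0 b) : |x ^ s - y ^ s| ≤ s * b ^ (s - 1) * |x - y| := by
  have hderiv : ∀ t ∈ Set.Icc 0 b,
      HasDerivWithinAt (fun t : ℝ => t ^ s) (s * t ^ (s - 1)) (Set.Icc 0 b) t :=
    fun t _ => (Real.hasDerivAt_rpow_const (Or.inr hs)).hasDerivWithinAt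
  have hbound : ∀ t ∈ Set.Icc 0 b, ‖s * t ^ (s - 1)‖ ≤ s * b ^ (s - 1) := by
    rintro t ⟨ht0, htb⟩
    rw [Real.norm_eq_abs, abs_of_nonneg (by positivity)]
    gcongr
  exact (convex_Icc 0 b).norm_image_sub_le_of_norm_hasDerivWithin_le hderiv hbound hy hx

theorem abs_le_of_triangular_supersolution {W : ℕ → ℕ → ℝ} {x e g : ℕ → ℝ} {N : ℕ}
    (hW : ∀ n k, 0 ≤ W n k) (hdiag : ∀ n ≥ N, W n n < 1)
    (hx : ∀ n ≥ N, x n = ∑ k ∈ range (n + 1), W n k * x k + e n)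
    (hg : ∀ n ≥ N, ∑ k ∈ range (n + 1), W n k * g k + |e n| ≤ g n)
    (hbase : ∀ n < N, |x n| ≤ g n) (n : ℕ) : |x n| ≤ g n := by
  induction n using Nat.strong_induction_on with
  | _ n ih =>
  rcases lt_or_ge n N with hn | hn
  · exact hbase n hn
  have hxn : |x n| ≤ ∑ k ∈ range n, W n k * |x k| + W n n * |x n| + |e n| := by
    conv_lhs => rw [hx n hn, sum_range_succ]
    refine (abs_add_three _ _ _).trans (add_le_add_three ?_ ?_ le_rfl)
    · refine (abs_sum_le_sum_abs _ _).trans_eq (sum_congr rfl fun k _ => ?_)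
      rw [abs_mul, abs_of_nonneg (hW n k)]
    · rw [abs_mul, abs_of_nonneg (hW n n)]
  have hoff : ∑ k ∈ range n, W n k * |x k| ≤ ∑ k ∈ range n, W n k * g k :=
    sum_le_sum fun k hk => mul_le_mul_of_nonneg_left (ih k (mem_range.1 hk)) (hW n k)
  have hgn := hg n hn
  rw [sum_range_succ] at hgn
  have hpos : 0 < 1 - W n n := sub_pos.2 (hdiag n hn)
  refine le_of_mul_le_mul_left ?_ hpos
  linarith

def binomialWeight (p : ℝ) (n k : ℕ) : ℝ := n.choose k * p ^ k * (1 - p) ^ (n - k)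

section Binomial

variable {p : ℝ}

lemma binomialWeight_nonneg (hp0 : 0 ≤ p) (hp1 : p ≤ 1) (n k : ℕ) :
    0 ≤ binomialWeight p n k := by
  have : 0 ≤ 1 - p := sub_nonneg.2 hp1
  unfold binomialWeight
  positivity

lemma eval_bernsteinPolynomial (p : ℝ) (n k : ℕ) :
    (bernsteinPolynomial ℝ n k).eval p = binomialWeight p n k := by
  simp [bernsteinPolynomial, binomialWeight]

lemma sum_binomialWeight (p : ℝ) (n : ℕ) : ∑ k ∈ range (n + 1), binomialWeight p n k = 1 := by
  simpa [Polynomial.eval_finsetSum, eval_bernsteinPolynomial] using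
    congrArg (Polynomial.eval p) (bernsteinPolynomial.sum ℝ n)

lemma sum_binomialWeight_mul_sq_sub (p : ℝ) (n : ℕ) :
    ∑ k ∈ range (n + 1), binomialWeight p n k * ((k : ℝ) - p * n) ^ 2 = n * p * (1 - p) := by
  have h := congrArg (Polynomial.eval p) (bernsteinPolynomial.variance ℝ n)
  simp only [Polynomial.eval_finsetSum, Polynomial.eval_mul, Polynomial.eval_pow,
    Polynomial.eval_sub, Polynomial.eval_X, Polynomial.eval_natCast,
    Polynomial.eval_one, eval_bernsteinPolynomial, nsmul_eq_mul] at h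
  rw [← h]
  exact sum_congr rfl fun k _ => by ring

lemma sum_binomialWeight_mul_abs_sub_le (hp0 : 0 ≤ p) (hp1 : p ≤ 1) (n : ℕ) :
    ∑ k ∈ range (n + 1), binomialWeight p n k * |(k : ℝ) - p * n| ≤ √n := by
  have hw := binomialWeight_nonneg hp0 hp1 n
  calc ∑ k ∈ range (n + 1), binomialWeight p n k * |(k : ℝ) - p * n|
      = ∑ k ∈ range (n + 1), √(binomialWeight p n k) *
          √(binomialWeight p n k * ((k : ℝ) - p * n) ^ 2) := by
        refine sum_congr rfl fun k _ => ?_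
        rw [Real.sqrt_mul (hw k), Real.sqrt_sq_eq_abs, ← mul_assoc, Real.mul_self_sqrt (hw k)]
    _ ≤ √(∑ k ∈ range (n + 1), binomialWeight p n k) *
          √(∑ k ∈ range (n + 1), binomialWeight p n k * ((k : ℝ) - p * n) ^ 2) :=
        Real.sum_sqrt_mul_sqrt_le _ hw fun k => mul_nonneg (hw k) (sq_nonneg _)
    _ ≤ √n := by
        rw [sum_binomialWeight, sum_binomialWeight_mul_sq_sub, Real.sqrt_one, one_mul]
        refine Real.sqrt_le_sqrt ?_
        have : p * (1 - p) ≤ 1 := by nlinarith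
        nlinarith [(Nat.cast_nonneg n : (0 : ℝ) ≤ n)]

lemma abs_sum_binomialWeight_mul_rpow_sub_le (hp0 : 0 ≤ p) (hp1 : p ≤ 1) {s : ℝ} (hs : 1 ≤ s)
    (n : ℕ) :
    |∑ k ∈ range (n + 1), binomialWeight p n k * (k : ℝ) ^ s - (p * n) ^ s|
      ≤ s * (n : ℝ) ^ (s - 1) * √n := by
  have hw := binomialWeight_nonneg hp0 hp1 n
  have hpn : p * n ∈ Set.Icc (0 : ℝ) n :=
    ⟨by positivity, mul_le_of_le_one_left (Nat.cast_nonneg n) hp1⟩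
  calc |∑ k ∈ range (n + 1), binomialWeight p n k * (k : ℝ) ^ s - (p * n) ^ s|
      = |∑ k ∈ range (n + 1), binomialWeight p n k * ((k : ℝ) ^ s - (p * n) ^ s)| := by
        simp only [mul_sub, sum_sub_distrib, ← sum_mul, sum_binomialWeight, one_mul]
    _ ≤ ∑ k ∈ range (n + 1),
          binomialWeight p n k * (s * (n : ℝ) ^ (s - 1) * |(k : ℝ) - p * n|) := by
        refine (abs_sum_le_sum_abs _ _).trans (sum_le_sum fun k hk => ?_)
        rw [abs_mul, abs_of_nonneg (hw k)]
        refine mul_le_mul_of_nonneg_left (abs_rpow_sub_rpow_le hs ⟨k.cast_nonneg, ?_⟩ hpn) (hw k)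
        exact_mod_cast Nat.lt_succ_iff.1 (mem_range.1 hk)
    _ = s * (n : ℝ) ^ (s - 1) * ∑ k ∈ range (n + 1), binomialWeight p n k * |(k : ℝ) - p * n| := by
        rw [mul_sum]
        exact sum_congr rfl fun k _ => by ring
    _ ≤ s * (n : ℝ) ^ (s - 1) * √n := by
        gcongr
        exact sum_binomialWeight_mul_abs_sub_le hp0 hp1 n

lemma isLittleO_sum_binomialWeight_mul_rpow_sub (hp0 : 0 ≤ p) (hp1 : p ≤ 1) {s : ℝ} (hs : 1 ≤ s) :
    (fun n : ℕ => ∑ k ∈ range (n + 1), binomialWeight p n k * (k : ℝ) ^ s - p ^ s * (n : ℝ) ^ s)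
      =o[atTop] fun n : ℕ => (n : ℝ) ^ s := by
  refine IsBigO.trans_isLittleO ?_ (isLittleO_natCast_rpow_rpow (by linarith : s - 1 / 2 < s))
  refine IsBigO.of_bound s ?_
  filter_upwards [eventually_gt_atTop 0] with n hn
  have hn' : (0 : ℝ) < n := by exact_mod_cast hn
  rw [← Real.mul_rpow hp0 hn'.le, Real.norm_eq_abs, Real.norm_eq_abs,
    abs_of_nonneg (Real.rpow_nonneg hn'.le _)]
  convert abs_sum_binomialWeight_mul_rpow_sub_le hp0 hp1 hs n using 1
  rw [mul_assoc, Real.sqrt_eq_rpow, ← Real.rpow_add hn']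
  ring_nf

end Binomial

section Trie

variable {ι : Type*} [Fintype ι] {M : ℝ} {p : ι → ℝ}

lemma strictAnti_mul_sum_rpow [Nonempty ι] (hM : 0 < M) (hp0 : ∀ j, 0 < p j)
    (hp1 : ∀ j, p j < 1) : StrictAnti fun s : ℝ => M * ∑ j, p j ^ s := fun _ _ hst =>
  mul_lt_mul_of_pos_left (sum_lt_sum_of_nonempty univ_nonempty fun j _ =>
    Real.rpow_lt_rpow_of_exponent_gt (hp0 j) (hp1 j) hst) hM

def trieWeight (M : ℝ) (p : ι → ℝ) (n k : ℕ) : ℝ := M * ∑ j, binomialWeight (p j) n k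

def trieToll (M : ℝ) (p : ι → ℝ) (x : ℕ → ℝ) (n : ℕ) : ℝ :=
  x n - ∑ k ∈ range (n + 1), trieWeight M p n k * x k

lemma mul_sum_sum_binomialWeight_mul (M : ℝ) (p : ι → ℝ) (n : ℕ) (f : ℕ → ℝ) :
    M * ∑ j, ∑ k ∈ range (n + 1), binomialWeight (p j) n k * f k
      = ∑ k ∈ range (n + 1), trieWeight M p n k * f k := by
  rw [sum_comm]
  simp only [trieWeight, mul_sum, sum_mul, mul_assoc]

lemma trieWeight_nonneg (hM : 0 ≤ M) (hp0 : ∀ j, 0 ≤ p j) (hp1 : ∀ j, p j ≤ 1) (n k : ℕ) :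
    0 ≤ trieWeight M p n k :=
  mul_nonneg hM (sum_nonneg fun j _ => binomialWeight_nonneg (hp0 j) (hp1 j) n k)

lemma isLittleO_sum_trieWeight_mul_rpow_sub (hp0 : ∀ j, 0 ≤ p j) (hp1 : ∀ j, p j ≤ 1) {s : ℝ}
    (hs : 1 ≤ s) :
    (fun n : ℕ => ∑ k ∈ range (n + 1), trieWeight M p n k * (k : ℝ) ^ s
        - (M * ∑ j, p j ^ s) * (n : ℝ) ^ s) =o[atTop] fun n : ℕ => (n : ℝ) ^ s := by
  have hsum := IsLittleO.fun_sum (s := univ) fun j _ =>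
    isLittleO_sum_binomialWeight_mul_rpow_sub (hp0 j) (hp1 j) hs
  refine (hsum.const_mul_left M).congr_left fun n => ?_
  rw [← mul_sum_sum_binomialWeight_mul, sum_sub_distrib, ← sum_mul]
  ring

lemma eventually_sum_trieWeight_mul_rpow_le (hp0 : ∀ j, 0 ≤ p j) (hp1 : ∀ j, p j ≤ 1) {s θ : ℝ}
    (hs : 1 ≤ s) (hθ : M * ∑ j, p j ^ s < θ) :
    ∀ᶠ n : ℕ in atTop, ∑ k ∈ range (n + 1), trieWeight M p n k * (k : ℝ) ^ s ≤ θ * (n : ℝ) ^ s := by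
  filter_upwards [(isLittleO_sum_trieWeight_mul_rpow_sub (M := M) hp0 hp1 hs).bound
    (sub_pos.2 hθ)] with n hn
  rw [Real.norm_of_nonneg (Real.rpow_nonneg n.cast_nonneg s)] at hn
  linarith [(Real.le_norm_self _).trans hn]

lemma trieWeight_self_le_of_sum_mul_rpow_le (hM : 0 ≤ M) (hp0 : ∀ j, 0 ≤ p j)
    (hp1 : ∀ j, p j ≤ 1) {s θ : ℝ} {n : ℕ} (hn : 1 ≤ n)
    (h : ∑ k ∈ range (n + 1), trieWeight M p n k * (k : ℝ) ^ s ≤ θ * (n : ℝ) ^ s) :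
    trieWeight M p n n ≤ θ := by
  have hle : trieWeight M p n n * (n : ℝ) ^ s ≤ θ * (n : ℝ) ^ s :=
    (single_le_sum (f := fun k => trieWeight M p n k * (k : ℝ) ^ s)
      (fun k _ => mul_nonneg (trieWeight_nonneg hM hp0 hp1 n k) (by positivity))
      (self_mem_range_succ n)).trans h
  exact le_of_mul_le_mul_right hle (Real.rpow_pos_of_pos (by exact_mod_cast hn) s)

theorem isLittleO_of_trieToll_isLittleO (hM : 0 ≤ M) (hp0 : ∀ j, 0 ≤ p j) (hp1 : ∀ j, p j ≤ 1)
    {α β : ℝ} (hβ1 : 1 ≤ β) (hβα : β < α) (hγα : M * ∑ j, p j ^ α < 1)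
    (hγβ : M * ∑ j, p j ^ β < 1) {x : ℕ → ℝ} (hx0 : x 0 = 0)
    (htoll : trieToll M p x =o[atTop] fun n : ℕ => (n : ℝ) ^ α) :
    x =o[atTop] fun n : ℕ => (n : ℝ) ^ α := by
  refine isLittleO_of_forall_le_add (isLittleO_natCast_rpow_rpow hβα) fun ε hε => ?_
  obtain ⟨θα, hγθα, hθα⟩ := exists_between hγα
  obtain ⟨θβ, hγθβ, hθβ⟩ := exists_between hγβ
  obtain ⟨N, hN⟩ := eventually_atTop.1 <|
    (eventually_sum_trieWeight_mul_rpow_le hp0 hp1 (hβ1.trans hβα.le) hγθα).and <|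
    (eventually_sum_trieWeight_mul_rpow_le hp0 hp1 hβ1 hγθβ).and <|
    (htoll.bound (mul_pos hε (sub_pos.2 hθα))).and (eventually_ge_atTop 1)
  set C := ∑ k ∈ range N, |x k|
  have hC : 0 ≤ C := sum_nonneg fun k _ => abs_nonneg _
  refine ⟨C, Eventually.of_forall fun n => ?_⟩
  simp only [Real.norm_eq_abs, abs_of_nonneg (Real.rpow_nonneg n.cast_nonneg _)]
  refine abs_le_of_triangular_supersolution (N := N) (e := trieToll M p x)
    (g := fun n => ε * (n : ℝ) ^ α + C * (n : ℝ) ^ β) (trieWeight_nonneg hM hp0 hp1)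
    (fun n hn => ?diag) (fun n _ => by rw [trieToll, add_sub_cancel]) (fun n hn => ?super)
    (fun n hn => ?base) n
  case diag =>
    obtain ⟨-, hβn, -, hn1⟩ := hN n hn
    exact (trieWeight_self_le_of_sum_mul_rpow_le hM hp0 hp1 hn1 hβn).trans_lt hθβ
  case super =>
    obtain ⟨hαn, hβn, hen, -⟩ := hN n hn
    rw [Real.norm_eq_abs, Real.norm_of_nonneg (by positivity)] at hen
    have hα' := mul_le_mul_of_nonneg_left hαn hε.le
    have hβ' := mul_le_mul_of_nonneg_left
      (hβn.trans (mul_le_of_le_one_left (by positivity) hθβ.le)) hC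
    simp only [mul_add, sum_add_distrib, mul_left_comm _ ε, mul_left_comm _ C, ← mul_sum]
    linarith
  case base =>
    rcases Nat.eq_zero_or_pos n with rfl | hn0
    · rw [hx0, abs_zero]
      positivity
    have hxC : |x n| ≤ C :=
      single_le_sum (f := fun k => |x k|) (fun k _ => abs_nonneg _) (mem_range.2 hn)
    have hCβ : C ≤ C * (n : ℝ) ^ β :=
      le_mul_of_one_le_right hC (Real.one_le_rpow (by exact_mod_cast hn0) (by linarith))
    have : 0 ≤ ε * (n : ℝ) ^ α := by positivity
    linarith

theorem isLittleO_trieToll_sub_rpow (hp0 : ∀ j, 0 ≤ p j) (hp1 : ∀ j, p j ≤ 1) {α c : ℝ}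
    (hα : 1 ≤ α) (hP : M * ∑ j, p j ^ α ≠ 1) {x b : ℕ → ℝ} (hx : trieToll M p x =ᶠ[atTop] b)
    (hb : (fun n : ℕ => b n - c * (n : ℝ) ^ α) =o[atTop] fun n : ℕ => (n : ℝ) ^ α) :
    trieToll M p (fun n => x n - c * (n : ℝ) ^ α / (1 - M * ∑ j, p j ^ α))
      =o[atTop] fun n : ℕ => (n : ℝ) ^ α := by
  set P := 1 - M * ∑ j, p j ^ α with hPdef
  have hPne : P ≠ 0 := sub_ne_zero.2 hP.symm
  refine (hb.add ((isLittleO_sum_trieWeight_mul_rpow_sub (M := M) hp0 hp1 hα).const_mul_left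
    (c / P))).congr' (hx.mono fun n hn => ?_) EventuallyEq.rfl
  have hpow : ∑ k ∈ range (n + 1), trieWeight M p n k * (c * (k : ℝ) ^ α / P)
      = c / P * ∑ k ∈ range (n + 1), trieWeight M p n k * (k : ℝ) ^ α := by
    rw [mul_sum]
    exact sum_congr rfl fun k _ => by ring
  have hγ : M * ∑ j, p j ^ α = 1 - P := by rw [hPdef]; ring
  dsimp only
  rw [← hn, hγ]
  simp only [trieToll, mul_sub, sum_sub_distrib, hpow]
  field_simp
  ring

end Trie

theorem trie_recurrence_asymptotic_transfer_general
    {M A : ℕ} (hM : 1 ≤ M) (hA : 2 ≤ A)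
    (p : Fin A → ℝ) (hp0 : ∀ j, 0 < p j) (hp1 : ∀ j, p j < 1)
    (hpsum : ∑ j, p j = 1)
    (ρ : ℝ) (hρ : ∑ j, (p j) ^ ρ = 1 / (M : ℝ))
    (a b : ℕ → ℝ) (ha0 : a 0 = 0)
    (hrec : ∀ n, 2 ≤ n → a n = (M : ℝ) * ∑ j, ∑ k ∈ Finset.range (n + 1),
        (n.choose k : ℝ) * p j ^ k * (1 - p j) ^ (n - k) * a k + b n)
    (c α : ℝ) (hα : ρ < α)
    (hb : (fun n : ℕ => b n - c * (n : ℝ) ^ α) =o[atTop] (fun n : ℕ => (n : ℝ) ^ α)) :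
    0 < 1 - (M : ℝ) * ∑ j, (p j) ^ α ∧
    (fun n : ℕ => a n - c * (n : ℝ) ^ α / (1 - (M : ℝ) * ∑ j, (p j) ^ α))
      =o[atTop] (fun n : ℕ => (n : ℝ) ^ α) := by
  have : Nonempty (Fin A) := Fin.pos_iff_nonempty.1 (by omega)
  have hMpos : (0 : ℝ) < M := by exact_mod_cast hM
  have hp0' : ∀ j, 0 ≤ p j := fun j => (hp0 j).le
  have hp1' : ∀ j, p j ≤ 1 := fun j => (hp1 j).le
  have hanti := strictAnti_mul_sum_rpow hMpos hp0 hp1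
  have hγρ : (M : ℝ) * ∑ j, p j ^ ρ = 1 := by rw [hρ]; field_simp
  have hγ : ∀ s, ρ < s → (M : ℝ) * ∑ j, p j ^ s < 1 := fun s hs => hγρ ▸ hanti hs
  have hρ1 : 1 ≤ ρ := hanti.le_iff_ge.1 <| by
    simpa only [Real.rpow_one, hpsum, mul_one, hγρ] using (Nat.one_le_cast.2 hM : (1 : ℝ) ≤ M)
  have htoll : trieToll M p a =ᶠ[atTop] b := by
    filter_upwards [eventually_ge_atTop 2] with n hn
    rw [trieToll, sub_eq_iff_eq_add', ← mul_sum_sum_binomialWeight_mul]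
    exact hrec n hn
  refine ⟨sub_pos.2 (hγ α hα), isLittleO_of_trieToll_isLittleO (β := (ρ + α) / 2) hMpos.le hp0'
    hp1' (by linarith) (by linarith) (hγ α hα) (hγ _ (by linarith))
    (by simp [ha0, Real.zero_rpow (by linarith : α ≠ 0)]) ?_⟩
  exact isLittleO_trieToll_sub_rpow hp0' hp1' (hρ1.trans hα.le) (hγ α hα).ne htoll hb

/-- **Asymptotic transfer for the trie recurrence, large toll-sequence case**
(Proposition 4). If `(a_n)` satisfies the trie recurrence with toll-sequence
`b_n = c·n^α + o(n^α)` where `α > ρ`, then `P(α) = 1 - M ∑_j p_j^α > 0` and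
`a_n = c·n^α/P(α) + o(n^α)`. -/
theorem trie_recurrence_asymptotic_transfer
    {M A : ℕ} (hM : 1 ≤ M) (hA : 2 ≤ A)
    (p : Fin A → ℝ) (hp0 : ∀ j, 0 < p j) (hp1 : ∀ j, p j < 1)
    (hpsum : ∑ j, p j = 1)
    (hnonexp : ∑ j, (p j) ^ 2 < 1 / (M : ℝ))
    (ρ : ℝ) (hρ : ∑ j, (p j) ^ ρ = 1 / (M : ℝ))
    (a b : ℕ → ℝ) (ha0 : a 0 = 0) (ha1 : a 1 = 0)
    (hrec : ∀ n, 2 ≤ n → a n = (M : ℝ) * ∑ j, ∑ k ∈ Finset.range (n + 1),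
        (n.choose k : ℝ) * p j ^ k * (1 - p j) ^ (n - k) * a k + b n)
    (c α : ℝ) (hα : ρ < α)
    (hb : (fun n : ℕ => b n - c * (n : ℝ) ^ α) =o[atTop] (fun n : ℕ => (n : ℝ) ^ α)) :
    0 < 1 - (M : ℝ) * ∑ j, (p j) ^ α ∧
    (fun n : ℕ => a n - c * (n : ℝ) ^ α / (1 - (M : ℝ) * ∑ j, (p j) ^ α))
      =o[atTop] (fun n : ℕ => (n : ℝ) ^ α) :=
  trie_recurrence_asymptotic_transfer_general hM hA p hp0 hp1 hpsum ρ hρ a b ha0 hrec c α hα hb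
end

section
/- Explicit solution of the trie recurrence: if the real sequence (a_n) satisfies the trie recurrence with toll-sequence (b_n), then for every n ≥ 0, a_n = Σ_{ℓ=0}^∞ M^ℓ Σ_{k ∈ ℕ^A, k_1+…+k_A = ℓ} (ℓ choose k_1,…,k_A) Σ_{i=2}^n C(n,i) (1 - p^k)^{n-i} (p^k)^i b_i, where p^k := p_1^{k_1}···p_A^{k_A} and (ℓ choose k_1,…,k_A) = ℓ!/(k_1!···k_A!); the outer series converges absolutely. -/
/-!
Write `B_n c (x) = ∑_i C(n,i) x^i (1-x)^(n-i) c_i` for the mean of `c` over a `Bin(n, x)` law.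
The `ℓ`-th term of the series is `T n ℓ = M^ℓ ∑_w B_n c (p_w)`, summed over the words `w` of
length `ℓ` with `p_w` the product of their letter probabilities. Splitting off the first letter
of `w` and thinning binomials (`Bin(Bin(n, r), q) = Bin(n, r q)`) gives
`T n (ℓ+1) = M ∑_j ∑_m C(n,m) p_j^m (1-p_j)^(n-m) T m ℓ`, while `T n 0 = b n`. Since
`B_n c (x) = O(x²)`, the terms are dominated by the geometric series `(M ∑_j p_j²)^ℓ`, so
`∑_ℓ T n ℓ` converges and satisfies the recurrence. Solutions are unique because the coefficient
`M ∑_j p_j^n` of `a n` on the right-hand side is less than `1`.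
-/

open Finset Polynomial

section MultinomialSum

variable {A : ℕ} (p : Fin A → ℝ)

/-- The sum of `f (∏ i, p (w i))` over the `A ^ ℓ` words `w` of length `ℓ`, grouped by letter
counts `k`. -/
noncomputable def multinomialSum (ℓ : ℕ) (f : ℝ → ℝ) : ℝ :=
  ∑ k ∈ Nat.antidiagonalTuple A ℓ, (Nat.multinomial univ k : ℝ) * f (∏ j, p j ^ k j)

theorem multinomialSum_zero (f : ℝ → ℝ) : multinomialSum p 0 f = f 1 := by
  simp [multinomialSum, Nat.antidiagonalTuple_zero_right, Nat.multinomial]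

theorem multinomialSum_sum_mul {ι : Type*} (s : Finset ι) (w : ι → ℝ) (f : ι → ℝ → ℝ)
    (ℓ : ℕ) :
    multinomialSum p ℓ (fun x => ∑ i ∈ s, w i * f i x) =
      ∑ i ∈ s, w i * multinomialSum p ℓ (f i) := by
  simp only [multinomialSum, mul_sum]
  rw [sum_comm]
  exact sum_congr rfl fun i _ => sum_congr rfl fun k _ => by ring

theorem multinomialSum_const_mul (w : ℝ) (f : ℝ → ℝ) (ℓ : ℕ) :
    multinomialSum p ℓ (fun x => w * f x) = w * multinomialSum p ℓ f := by
  simp only [multinomialSum, mul_sum]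
  exact sum_congr rfl fun k _ => by ring

theorem multinomialSum_pow (ℓ e : ℕ) :
    multinomialSum p ℓ (· ^ e) = (∑ j, p j ^ e) ^ ℓ := by
  rw [sum_pow_eq_sum_piAntidiag, piAntidiag_univ_fin_eq_antidiagonalTuple]
  refine sum_congr rfl fun k _ => ?_
  simp only [← prod_pow, ← pow_mul, mul_comm]

theorem multinomialSum_sum_monomial (s : Finset ℕ) (w : ℕ → ℝ) (ℓ : ℕ) :
    multinomialSum p ℓ (fun x => ∑ e ∈ s, w e * x ^ e) = ∑ e ∈ s, w e * (∑ j, p j ^ e) ^ ℓ := by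
  simp only [multinomialSum_sum_mul p s w (fun e x => x ^ e), multinomialSum_pow]

/-- Splitting off the first letter of a word. For a polynomial it reduces, monomial by monomial,
to `(∑ j, p j ^ e) ^ (ℓ + 1) = ∑ j, p j ^ e * (∑ j, p j ^ e) ^ ℓ`. -/
theorem multinomialSum_succ_eval (P : ℝ[X]) (ℓ : ℕ) :
    multinomialSum p (ℓ + 1) P.eval = ∑ j, multinomialSum p ℓ (fun x => P.eval (p j * x)) := by
  simp only [eval_eq_sum_range, mul_pow, ← mul_assoc, multinomialSum_sum_monomial]
  rw [sum_comm]
  refine sum_congr rfl fun e _ => ?_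
  rw [pow_succ, ← sum_mul, ← mul_sum]
  ring

theorem abs_multinomialSum_le (hp0 : ∀ j, 0 ≤ p j) (hp1 : ∀ j, p j ≤ 1) {f g : ℝ → ℝ}
    (hfg : ∀ x ∈ Set.Icc (0 : ℝ) 1, |f x| ≤ g x) (ℓ : ℕ) :
    |multinomialSum p ℓ f| ≤ multinomialSum p ℓ g := by
  refine (abs_sum_le_sum_abs _ _).trans (sum_le_sum fun k _ => ?_)
  rw [abs_mul, Nat.abs_cast]
  refine mul_le_mul_of_nonneg_left (hfg _ ⟨?_, ?_⟩) (Nat.cast_nonneg _)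
  · exact prod_nonneg fun j _ => pow_nonneg (hp0 j) _
  · exact prod_le_one (fun j _ => pow_nonneg (hp0 j) _) fun j _ => pow_le_one₀ (hp0 j) (hp1 j)

end MultinomialSum

/-- Binomial thinning: keeping each of `n` items with probability `r` and then with
probability `q` is keeping it with probability `r * q`. -/
theorem sum_choose_mul_choose_thinning (n i : ℕ) (hi : i ≤ n) (r q : ℝ) :
    ∑ m ∈ Icc i n, (n.choose m : ℝ) * r ^ m * (1 - r) ^ (n - m) *
        ((m.choose i : ℝ) * q ^ i * (1 - q) ^ (m - i)) =
      (n.choose i : ℝ) * (r * q) ^ i * (1 - r * q) ^ (n - i) := by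
  have hbinom : (1 - r * q) ^ (n - i) =
      ∑ t ∈ range (n - i + 1), (r * (1 - q)) ^ t * (1 - r) ^ (n - i - t) * ((n - i).choose t) := by
    rw [← add_pow]; ring_nf
  rw [← Ico_add_one_right_eq_Icc, sum_Ico_eq_sum_range, Nat.sub_add_comm hi, hbinom, mul_sum]
  refine sum_congr rfl fun t ht => ?_
  have ht : t ≤ n - i := Nat.lt_succ_iff.mp (mem_range.mp ht)
  have hchoose : (n.choose (i + t) : ℝ) * ((i + t).choose i) = n.choose i * (n - i).choose t := by
    rw [← Nat.cast_mul, ← Nat.cast_mul, Nat.choose_mul (Nat.le_add_right i t),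
      Nat.add_sub_cancel_left]
  rw [Nat.add_sub_cancel_left, show n - (i + t) = n - i - t by omega, mul_pow, mul_pow]
  linear_combination (r ^ (i + t) * (1 - r) ^ (n - i - t) * q ^ i * (1 - q) ^ t) * hchoose

section BernsteinSum

variable (c : ℕ → ℝ)

noncomputable def bernsteinSum (n : ℕ) : ℝ[X] :=
  ∑ i ∈ range (n + 1), c i • bernsteinPolynomial ℝ n i

theorem eval_bernsteinSum (n : ℕ) (x : ℝ) :
    (bernsteinSum c n).eval x =
      ∑ i ∈ range (n + 1), (n.choose i : ℝ) * x ^ i * (1 - x) ^ (n - i) * c i := by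
  simp only [bernsteinSum, eval_finsetSum, eval_smul, bernsteinPolynomial, eval_mul, eval_pow,
    eval_sub, eval_one, eval_X, eval_natCast, smul_eq_mul]
  exact sum_congr rfl fun i _ => by ring

theorem eval_one_bernsteinSum (n : ℕ) : (bernsteinSum c n).eval 1 = c n := by
  simp [bernsteinSum, eval_finsetSum, bernsteinPolynomial.eval_at_1]

theorem eval_mul_bernsteinSum (n : ℕ) (r q : ℝ) :
    (bernsteinSum c n).eval (r * q) = ∑ m ∈ range (n + 1),
      (n.choose m : ℝ) * r ^ m * (1 - r) ^ (n - m) * (bernsteinSum c m).eval q := by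
  simp only [eval_bernsteinSum, mul_sum]
  rw [sum_comm' (t' := range (n + 1)) (s' := fun i => Icc i n)
    (fun m i => by simp only [mem_range, mem_Icc]; omega)]
  refine sum_congr rfl fun i hi => ?_
  rw [← sum_choose_mul_choose_thinning n i (Nat.lt_succ_iff.mp (mem_range.mp hi)), sum_mul]
  exact sum_congr rfl fun m _ => by ring

theorem abs_eval_bernsteinSum_le (hc0 : c 0 = 0) (hc1 : c 1 = 0) (n : ℕ) {x : ℝ}
    (hx : x ∈ Set.Icc (0 : ℝ) 1) :
    |(bernsteinSum c n).eval x| ≤ (∑ i ∈ range (n + 1), (n.choose i : ℝ) * |c i|) * x ^ 2 := by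
  rw [eval_bernsteinSum, sum_mul]
  refine (abs_sum_le_sum_abs _ _).trans (sum_le_sum fun i _ => ?_)
  obtain hi | hi := lt_or_ge i 2
  · interval_cases i <;> simp [hc0, hc1]
  obtain ⟨hx0, hx1⟩ := hx
  have h1x : 0 ≤ 1 - x := sub_nonneg.mpr hx1
  calc |(n.choose i : ℝ) * x ^ i * (1 - x) ^ (n - i) * c i|
      = (n.choose i : ℝ) * |c i| * (x ^ i * (1 - x) ^ (n - i)) := by
        rw [abs_mul, abs_of_nonneg (by positivity)]; ring
    _ ≤ (n.choose i : ℝ) * |c i| * (x ^ 2 * 1) := by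
        gcongr (n.choose i : ℝ) * |c i| * (?_ * ?_)
        exacts [pow_le_pow_of_le_one hx0 hx1 hi, pow_le_one₀ h1x (sub_le_self 1 hx0)]
    _ = (n.choose i : ℝ) * |c i| * x ^ 2 := by ring

end BernsteinSum

section Trie

variable {A : ℕ} (M : ℝ) (p : Fin A → ℝ)

def IsTrieSolution (b a : ℕ → ℝ) : Prop :=
  a 0 = 0 ∧ a 1 = 0 ∧ ∀ n, 2 ≤ n → a n = M * ∑ j, ∑ k ∈ range (n + 1),
    (n.choose k : ℝ) * p j ^ k * (1 - p j) ^ (n - k) * a k + b n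

/-- The top term `k = n` of the recurrence contains `a n` itself, with coefficient
`M * ∑ j, p j ^ n`; away from `1` it can be solved for. -/
theorem IsTrieSolution.unique {b a a' : ℕ → ℝ} (hMp : ∀ n, 2 ≤ n → M * ∑ j, p j ^ n ≠ 1)
    (ha : IsTrieSolution M p b a) (ha' : IsTrieSolution M p b a') : a = a' := by
  funext n
  induction n using Nat.strong_induction_on with
  | _ n ih =>
    obtain hn | hn := lt_or_ge n 2
    · interval_cases n
      exacts [ha.1.trans ha'.1.symm, ha.2.1.trans ha'.2.1.symm]
    have hdiff : ∑ j, ∑ k ∈ range (n + 1), (n.choose k : ℝ) * p j ^ k * (1 - p j) ^ (n - k) * a k -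
        ∑ j, ∑ k ∈ range (n + 1), (n.choose k : ℝ) * p j ^ k * (1 - p j) ^ (n - k) * a' k =
        (∑ j, p j ^ n) * (a n - a' n) := by
      rw [← sum_sub_distrib, sum_mul]
      refine sum_congr rfl fun j _ => ?_
      rw [← sum_sub_distrib, sum_range_succ,
        sum_eq_zero fun k hk => by rw [ih k (mem_range.mp hk), sub_self]]
      simp [mul_sub]
    have hfix : (a n - a' n) * (1 - M * ∑ j, p j ^ n) = 0 := by
      linear_combination ha.2.2 n hn - ha'.2.2 n hn + M * hdiff
    have hcoeff : 1 - M * ∑ j, p j ^ n ≠ 0 := sub_ne_zero.mpr (hMp n hn).symm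
    exact sub_eq_zero.mp ((mul_eq_zero.mp hfix).resolve_right hcoeff)

theorem mul_sum_pow_lt_one (hp0 : ∀ j, 0 ≤ p j) (hp1 : ∀ j, p j ≤ 1) (hM : 0 ≤ M)
    (hMp : M * ∑ j, p j ^ 2 < 1) {n : ℕ} (hn : 2 ≤ n) : M * ∑ j, p j ^ n < 1 :=
  lt_of_le_of_lt (mul_le_mul_of_nonneg_left
    (sum_le_sum fun j _ => pow_le_pow_of_le_one (hp0 j) (hp1 j) hn) hM) hMp

variable (c : ℕ → ℝ)

noncomputable def trieTerm (n ℓ : ℕ) : ℝ :=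
  M ^ ℓ * multinomialSum p ℓ (bernsteinSum c n).eval

theorem trieTerm_zero (n : ℕ) : trieTerm M p c n 0 = c n := by
  simp [trieTerm, multinomialSum_zero, eval_one_bernsteinSum]

theorem trieTerm_succ (n ℓ : ℕ) :
    trieTerm M p c n (ℓ + 1) = M * ∑ j, ∑ m ∈ range (n + 1),
      (n.choose m : ℝ) * p j ^ m * (1 - p j) ^ (n - m) * trieTerm M p c m ℓ := by
  simp only [trieTerm, multinomialSum_succ_eval, eval_mul_bernsteinSum, multinomialSum_sum_mul,
    mul_sum]
  refine sum_congr rfl fun j _ => sum_congr rfl fun m _ => by ring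

theorem abs_trieTerm_le (hM : 0 ≤ M) (hp0 : ∀ j, 0 ≤ p j) (hp1 : ∀ j, p j ≤ 1)
    (hc0 : c 0 = 0) (hc1 : c 1 = 0) (n ℓ : ℕ) :
    |trieTerm M p c n ℓ| ≤
      (∑ i ∈ range (n + 1), (n.choose i : ℝ) * |c i|) * (M * ∑ j, p j ^ 2) ^ ℓ := by
  have hbound := abs_multinomialSum_le p hp0 hp1
    (fun x hx => abs_eval_bernsteinSum_le c hc0 hc1 n hx) ℓ
  rw [multinomialSum_const_mul, multinomialSum_pow] at hbound
  rw [trieTerm, abs_mul, abs_pow, abs_of_nonneg hM, mul_pow, mul_left_comm]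
  exact mul_le_mul_of_nonneg_left hbound (pow_nonneg hM ℓ)

theorem summable_abs_trieTerm (hM : 0 ≤ M) (hp0 : ∀ j, 0 ≤ p j) (hp1 : ∀ j, p j ≤ 1)
    (hMp : M * ∑ j, p j ^ 2 < 1) (hc0 : c 0 = 0) (hc1 : c 1 = 0) (n : ℕ) :
    Summable fun ℓ => |trieTerm M p c n ℓ| :=
  .of_nonneg_of_le (fun _ => abs_nonneg _) (abs_trieTerm_le M p c hM hp0 hp1 hc0 hc1 n)
    ((summable_geometric_of_lt_one (mul_nonneg hM (by positivity)) hMp).mul_left _)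

theorem isTrieSolution_tsum_trieTerm (hM : 0 ≤ M) (hp0 : ∀ j, 0 ≤ p j) (hp1 : ∀ j, p j ≤ 1)
    (hMp : M * ∑ j, p j ^ 2 < 1) (hc0 : c 0 = 0) (hc1 : c 1 = 0) :
    IsTrieSolution M p c fun n => ∑' ℓ, trieTerm M p c n ℓ := by
  have hsum n : Summable (trieTerm M p c n) :=
    summable_abs_iff.mp (summable_abs_trieTerm M p c hM hp0 hp1 hMp hc0 hc1 n)
  have hsmall : bernsteinSum c 0 = 0 ∧ bernsteinSum c 1 = 0 := by
    simp [bernsteinSum, sum_range_succ, hc0, hc1]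
  refine ⟨by simp [trieTerm, hsmall.1, multinomialSum],
    by simp [trieTerm, hsmall.2, multinomialSum], fun n _ => ?_⟩
  dsimp only
  rw [(hsum n).tsum_eq_zero_add, trieTerm_zero, add_comm]
  simp only [trieTerm_succ]
  rw [tsum_mul_left, Summable.tsum_finsetSum fun j _ => summable_sum fun m _ => (hsum m).mul_left _]
  simp only [Summable.tsum_finsetSum fun m _ => (hsum m).mul_left _, tsum_mul_left]

end Trie

theorem trie_recurrence_explicit_solution_general
    {M A : ℕ}
    (p : Fin A → ℝ) (hp0 : ∀ j, 0 < p j) (hp1 : ∀ j, p j < 1)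
    (hnonexp : ∑ j, (p j) ^ 2 < 1 / (M : ℝ))
    (a b : ℕ → ℝ) (ha0 : a 0 = 0) (ha1 : a 1 = 0)
    (hrec : ∀ n, 2 ≤ n → a n = (M : ℝ) * ∑ j, ∑ k ∈ Finset.range (n + 1),
        (n.choose k : ℝ) * p j ^ k * (1 - p j) ^ (n - k) * a k + b n)
    (T : ℕ → ℕ → ℝ)
    (hT : ∀ n ℓ, T n ℓ = (M : ℝ) ^ ℓ *
      ∑ k ∈ Finset.Nat.antidiagonalTuple A ℓ, (Nat.multinomial Finset.univ k : ℝ) *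
        ∑ i ∈ Finset.Icc 2 n, (n.choose i : ℝ) *
          (1 - ∏ j, p j ^ k j) ^ (n - i) * (∏ j, p j ^ k j) ^ i * b i) :
    ∀ n : ℕ, Summable (fun ℓ : ℕ => |T n ℓ|) ∧ a n = ∑' ℓ : ℕ, T n ℓ := by
  set c : ℕ → ℝ := fun i => if 2 ≤ i then b i else 0
  have hc0 : c 0 = 0 := by simp [c]
  have hc1 : c 1 = 0 := by simp [c]
  have hT' : T = trieTerm M p c := by
    ext n ℓ
    have hIcc : Icc 2 n = (range (n + 1)).filter (2 ≤ ·) := by ext; simp; omega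
    simp only [hT, trieTerm, multinomialSum, eval_bernsteinSum, hIcc, sum_filter, c, mul_ite,
      mul_zero]
    refine congrArg _ (sum_congr rfl fun k _ => congrArg _ (sum_congr rfl fun i _ => ?_))
    split_ifs <;> ring
  have hM : (0 : ℝ) ≤ M := Nat.cast_nonneg M
  have hp0' j : 0 ≤ p j := (hp0 j).le
  have hp1' j : p j ≤ 1 := (hp1 j).le
  have hMp : (M : ℝ) * ∑ j, p j ^ 2 < 1 := by
    rcases eq_or_ne M 0 with rfl | hM0
    · simp
    · rwa [lt_div_iff₀ (by positivity), mul_comm] at hnonexp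
  have ha : IsTrieSolution M p c a := ⟨ha0, ha1, fun n hn => by simpa [c, hn] using hrec n hn⟩
  have hsol := ha.unique M p (fun n hn => (mul_sum_pow_lt_one M p hp0' hp1' hM hMp hn).ne)
    (isTrieSolution_tsum_trieTerm M p c hM hp0' hp1' hMp hc0 hc1)
  subst hT'
  exact fun n => ⟨summable_abs_trieTerm M p c hM hp0' hp1' hMp hc0 hc1 n, congrFun hsol n⟩

/-- **Explicit solution of the trie recurrence** (Lemma 1).
If `(a_n)` satisfies the trie recurrence with toll-sequence `(b_n)`, then for all `n`,
`a_n = ∑_{ℓ≥0} M^ℓ ∑_{k₁+⋯+k_A=ℓ} (ℓ choose k) ∑_{i=2}^n C(n,i) (1-p^k)^{n-i} (p^k)^i b_i`,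
the outer series converging absolutely. -/
theorem trie_recurrence_explicit_solution
    {M A : ℕ} (hM : 1 ≤ M) (hA : 2 ≤ A)
    (p : Fin A → ℝ) (hp0 : ∀ j, 0 < p j) (hp1 : ∀ j, p j < 1)
    (hpsum : ∑ j, p j = 1)
    (hnonexp : ∑ j, (p j) ^ 2 < 1 / (M : ℝ))
    (a b : ℕ → ℝ) (ha0 : a 0 = 0) (ha1 : a 1 = 0)
    (hrec : ∀ n, 2 ≤ n → a n = (M : ℝ) * ∑ j, ∑ k ∈ Finset.range (n + 1),
        (n.choose k : ℝ) * p j ^ k * (1 - p j) ^ (n - k) * a k + b n)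
    (T : ℕ → ℕ → ℝ)
    (hT : ∀ n ℓ, T n ℓ = (M : ℝ) ^ ℓ *
      ∑ k ∈ Finset.Nat.antidiagonalTuple A ℓ, (Nat.multinomial Finset.univ k : ℝ) *
        ∑ i ∈ Finset.Icc 2 n, (n.choose i : ℝ) *
          (1 - ∏ j, p j ^ k j) ^ (n - i) * (∏ j, p j ^ k j) ^ i * b i) :
    ∀ n : ℕ, Summable (fun ℓ : ℕ => |T n ℓ|) ∧ a n = ∑' ℓ : ℕ, T n ℓ :=
  trie_recurrence_explicit_solution_general p hp0 hp1 hnonexp a b ha0 ha1 hrec T hT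
end

section
/- Let 1 ≤ ρ < 2, a > 1, and set χ_k = 2πik/log a for k ∈ ℤ and f(t) = 1 - (t+1)e^{-t} for t > 0. Then for every real x, the series Σ_{k ∈ ℤ} (Γ(2-ρ-χ_k)/(ρ+χ_k)) e^{2πikx} converges absolutely and equals (log a) · Σ_{v ∈ ℤ} f(a^{x-v}) a^{-ρ(x-v)}; in particular this sum is a positive real number for every x. -/
/-!
Poisson summation for `h(y) = f(a ^ y) a ^ (-ρ y)`. The substitution `t = a ^ y` turns the Fourier
transform `𝓕 h (k)` into `(log a)⁻¹` times the Mellin integral `∫₀^∞ f(t) t^(-s-1) dt` at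
`s = ρ + χ_k`, and integrating by parts (`f' (t) = t e^(-t)`) gives `Γ(2 - s) / s`. The hypotheses
of Poisson summation hold because `0 < f(t) ≤ min 1 (t² / 2)` makes `h` decay exponentially in both
directions, while `Γ(2 - s) = Γ(4 - s) / ((2 - s)(3 - s))` makes `Γ(2 - s) / s = O(|Im s|⁻²)`.
Positivity of `f` gives positivity of the sum.
-/

open Complex MeasureTheory Set Filter Topology Asymptotics
open scoped FourierTransform Real

theorem Real.fourier_comp_mul_left {E : Type*} [NormedAddCommGroup E] [NormedSpace ℂ E]
    (f : ℝ → E) {c : ℝ} (hc : c ≠ 0) (ξ : ℝ) :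
    𝓕 (fun y => f (c * y)) ξ = |c|⁻¹ • 𝓕 f (ξ / c) := by
  simp_rw [Real.fourier_real_eq_integral_exp_smul, ← abs_inv]
  rw [← Measure.integral_comp_mul_left _ c]
  congr with y
  field_simp

theorem Complex.norm_Gamma_le_Gamma_re {z : ℂ} (hz : 0 < z.re) : ‖Gamma z‖ ≤ Real.Gamma z.re := by
  rw [Gamma_eq_integral hz, GammaIntegral, Real.Gamma_eq_integral hz]
  refine (norm_integral_le_integral_norm _).trans_eq (setIntegral_congr_fun measurableSet_Ioi ?_)
  intro t ht
  simp only [norm_mul, norm_real, Real.norm_of_nonneg (Real.exp_pos _).le,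
    norm_cpow_eq_rpow_re_of_pos ht, sub_re, one_re]

/-- Two steps of `Γ(z + 1) = z Γ(z)` trade `Γ(2 - s)` for `Γ(4 - s) / ((2 - s)(3 - s))`. -/
theorem Complex.norm_Gamma_two_sub_div_mul_im_sq_le {s : ℂ} (hs : s.re ≤ 2) :
    ‖Gamma (2 - s) / s‖ * s.im ^ 2 ≤ Real.Gamma (4 - s.re) := by
  have hGamma_pos : 0 < Real.Gamma (4 - s.re) := Real.Gamma_pos_of_pos (by linarith)
  rcases eq_or_ne s.im 0 with him | him
  · simpa [him] using hGamma_pos.le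
  have hne {c : ℂ} (hc : c.im = 0) : c - s ≠ 0 := fun h => him (by simpa [hc] using congrArg im h)
  have hrec : Gamma (4 - s) = (3 - s) * ((2 - s) * Gamma (2 - s)) := by
    rw [show 4 - s = 3 - s + 1 by ring, Gamma_add_one _ (hne (by simp)),
      show 3 - s = 2 - s + 1 by ring, Gamma_add_one _ (hne (by simp))]
  have him_le_two : |s.im| ≤ ‖2 - s‖ := by simpa using abs_im_le_norm (2 - s)
  have hone_le_three : 1 ≤ ‖3 - s‖ := by
    have := abs_re_le_norm (3 - s)
    rw [sub_re, re_ofNat, abs_of_pos (by linarith)] at this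
    linarith
  have him_le : |s.im| ≤ ‖s‖ := abs_im_le_norm s
  calc ‖Gamma (2 - s) / s‖ * s.im ^ 2 = ‖Gamma (2 - s)‖ * |s.im| * (|s.im| / ‖s‖) := by
        rw [norm_div, ← sq_abs]; ring
    _ ≤ ‖Gamma (2 - s)‖ * (‖2 - s‖ * ‖3 - s‖) * 1 := by
        gcongr
        · exact him_le_two.trans (le_mul_of_one_le_right (norm_nonneg _) hone_le_three)
        · exact div_le_one_of_le₀ him_le (norm_nonneg _)
    _ = ‖Gamma (4 - s)‖ := by rw [hrec]; simp only [norm_mul]; ring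
    _ ≤ Real.Gamma (4 - s.re) := by
        simpa using norm_Gamma_le_Gamma_re (z := 4 - s) (by rw [sub_re, re_ofNat]; linarith)

theorem isBigO_cocompact_rpow_neg_of_norm_le_exp {E : Type*} [Norm E] {f : ℝ → E} {C c : ℝ}
    (hc : 0 < c) (hf : ∀ y, ‖f y‖ ≤ C * Real.exp (-c * |y|)) (b : ℝ) :
    f =O[cocompact ℝ] (|·| ^ (-b)) := by
  have hexp := (isLittleO_exp_neg_mul_rpow_atTop hc (-b)).isBigO.comp_tendsto
    (tendsto_norm_cocompact_atTop (E := ℝ))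
  refine (IsBigO.of_bound C (Eventually.of_forall fun y => ?_)).trans hexp
  rw [Function.comp_apply, Real.norm_of_nonneg (Real.exp_pos _).le]
  exact hf y

theorem isBigO_cocompact_rpow_neg_of_norm_mul_rpow_le {E : Type*} [Norm E] {f : ℝ → E} {b C : ℝ}
    (hf : ∀ ξ, ‖f ξ‖ * |ξ| ^ b ≤ C) : f =O[cocompact ℝ] (|·| ^ (-b)) := by
  refine IsBigO.of_bound C ?_
  filter_upwards [Filter.mem_cocompact.2 ⟨{0}, isCompact_singleton, fun ξ hξ => hξ⟩] with ξ hξ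
  have hpos : 0 < |ξ| ^ b := Real.rpow_pos_of_pos (abs_pos.2 hξ) b
  rw [Real.rpow_neg (abs_nonneg ξ), norm_inv, Real.norm_of_nonneg hpos.le, ← div_eq_mul_inv,
    le_div_iff₀ hpos]
  exact hf ξ

theorem summable_int_of_isBigO_cocompact_rpow {E : Type*} [NormedAddCommGroup E] [CompleteSpace E]
    {f : ℝ → E} {b : ℝ} (hb : 1 < b) (hf : f =O[cocompact ℝ] (|·| ^ (-b))) :
    Summable fun n : ℤ => f n :=
  summable_of_isBigO (Real.summable_abs_int_rpow hb) (hf.comp_tendsto Int.tendsto_coe_cofinite)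

theorem tsum_int_sub_eq_tsum_add {E : Type*} [AddCommMonoid E] [TopologicalSpace E]
    (g : ℝ → E) (x : ℝ) : ∑' v : ℤ, g (x - v) = ∑' n : ℤ, g (x + n) := by
  rw [← (Equiv.neg ℤ).tsum_eq]
  simp [sub_eq_add_neg]

/-- The lower incomplete gamma function `γ(2, t) = ∫₀ᵗ u e^{-u} du`. -/
noncomputable def lowerGammaTwo (t : ℝ) : ℝ := 1 - (t + 1) * Real.exp (-t)

lemma hasDerivAt_lowerGammaTwo (t : ℝ) :
    HasDerivAt lowerGammaTwo (t * Real.exp (-t)) t := by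
  have := (hasDerivAt_const t (1 : ℝ)).sub
    (((hasDerivAt_id t).add_const 1).mul ((hasDerivAt_neg t).exp))
  exact this.congr_deriv (by simp only [id]; ring)

lemma continuous_lowerGammaTwo : Continuous lowerGammaTwo := by
  unfold lowerGammaTwo; fun_prop

lemma lowerGammaTwo_zero : lowerGammaTwo 0 = 0 := by simp [lowerGammaTwo]

lemma lowerGammaTwo_pos {t : ℝ} (ht : 0 < t) : 0 < lowerGammaTwo t := by
  have h := mul_lt_mul_of_pos_right (Real.add_one_lt_exp ht.ne') (Real.exp_pos (-t))
  rw [← Real.exp_add, add_neg_cancel, Real.exp_zero, add_comm] at h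
  simp only [lowerGammaTwo]
  linarith

lemma lowerGammaTwo_nonneg {t : ℝ} (ht : 0 ≤ t) : 0 ≤ lowerGammaTwo t := by
  rcases ht.eq_or_lt with rfl | ht
  · rw [lowerGammaTwo_zero]
  · exact (lowerGammaTwo_pos ht).le

lemma lowerGammaTwo_le_one {t : ℝ} (ht : -1 ≤ t) : lowerGammaTwo t ≤ 1 := by
  have : 0 ≤ (t + 1) * Real.exp (-t) := by have := Real.exp_pos (-t); nlinarith
  simp only [lowerGammaTwo]
  linarith

lemma lowerGammaTwo_le_sq_div_two {t : ℝ} (ht : 0 ≤ t) : lowerGammaTwo t ≤ t ^ 2 / 2 := by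
  have hderiv (u : ℝ) : HasDerivAt (fun u => u ^ 2 / 2 - lowerGammaTwo u)
      (u * (1 - Real.exp (-u))) u :=
    (((hasDerivAt_pow 2 u).div_const 2).sub (hasDerivAt_lowerGammaTwo u)).congr_deriv
      (by push_cast; ring)
  have hmono : MonotoneOn (fun u => u ^ 2 / 2 - lowerGammaTwo u) (Ici 0) :=
    monotoneOn_of_hasDerivWithinAt_nonneg (convex_Ici 0)
      (fun u _ => (hderiv u).continuousAt.continuousWithinAt)
      (fun u _ => (hderiv u).hasDerivWithinAt) fun u hu => by
        rw [interior_Ici, mem_Ioi] at hu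
        exact mul_nonneg hu.le (sub_nonneg.2 (Real.exp_le_one_iff.2 (by linarith)))
  have := hmono self_mem_Ici ht ht
  simp only [lowerGammaTwo_zero] at this
  linarith

lemma lowerGammaTwo_exp_mul_exp_le (ρ u : ℝ) :
    lowerGammaTwo (Real.exp u) * Real.exp (-ρ * u) ≤ Real.exp (-min ρ (2 - ρ) * |u|) := by
  rcases le_or_gt 0 u with hu | hu
  · calc lowerGammaTwo (Real.exp u) * Real.exp (-ρ * u) ≤ 1 * Real.exp (-ρ * u) := by
          gcongr
          exact lowerGammaTwo_le_one (by linarith [Real.exp_pos u])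
      _ ≤ Real.exp (-min ρ (2 - ρ) * |u|) := by
          rw [one_mul, abs_of_nonneg hu]
          gcongr
          exact min_le_left _ _
  · calc lowerGammaTwo (Real.exp u) * Real.exp (-ρ * u)
          ≤ Real.exp u ^ 2 / 2 * Real.exp (-ρ * u) := by
          gcongr
          exact lowerGammaTwo_le_sq_div_two (Real.exp_pos u).le
      _ = Real.exp ((2 - ρ) * u) / 2 := by
          rw [div_mul_eq_mul_div, ← Real.exp_nat_mul, ← Real.exp_add]
          push_cast; ring_nf
      _ ≤ Real.exp (-min ρ (2 - ρ) * |u|) := by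
          refine (half_le_self (Real.exp_pos _).le).trans ?_
          rw [abs_of_neg hu, Real.exp_le_exp]
          linarith [mul_le_mul_of_nonpos_right (min_le_right ρ (2 - ρ)) hu.le]

lemma norm_lowerGammaTwo_mul_cpow {t : ℝ} (ht : 0 < t) (z : ℂ) :
    ‖(lowerGammaTwo t : ℂ) * (t : ℂ) ^ z‖ = lowerGammaTwo t * t ^ z.re := by
  rw [norm_mul, norm_real, Real.norm_of_nonneg (lowerGammaTwo_nonneg ht.le),
    norm_cpow_eq_rpow_re_of_pos ht]

lemma mellinConvergent_lowerGammaTwo {s : ℂ} (hs0 : 0 < s.re) (hs2 : s.re < 2) :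
    MellinConvergent (fun t => (lowerGammaTwo t : ℂ)) (-s) := by
  refine mellinConvergent_of_isBigO_rpow (a := 0) (b := -2)
    ((continuous_ofReal.comp continuous_lowerGammaTwo).locallyIntegrable.locallyIntegrableOn _)
    ?_ (by simpa using hs0) ?_ (by rw [neg_re]; linarith)
  · refine IsBigO.of_bound 1 ?_
    filter_upwards [eventually_ge_atTop 0] with t ht
    simpa [Real.norm_of_nonneg (lowerGammaTwo_nonneg ht)] using lowerGammaTwo_le_one (by linarith)
  · refine IsBigO.of_bound (1 / 2) ?_
    filter_upwards [self_mem_nhdsWithin] with t (ht : 0 < t)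
    rw [norm_real, Real.norm_of_nonneg (lowerGammaTwo_nonneg ht.le), neg_neg,
      Real.norm_of_nonneg (by positivity), Real.rpow_two]
    linarith [lowerGammaTwo_le_sq_div_two ht.le]

lemma tendsto_lowerGammaTwo_mul_cpow_nhdsGT_zero {z : ℂ} (hz : -2 < z.re) :
    Tendsto (fun t : ℝ => (lowerGammaTwo t : ℂ) * (t : ℂ) ^ z) (𝓝[>] 0) (𝓝 0) := by
  have hpow : Tendsto (fun t : ℝ => t ^ (2 + z.re) / 2) (𝓝[>] 0) (𝓝 0) := by
    have := (Real.continuousAt_rpow_const 0 (2 + z.re) (Or.inr (by linarith))).tendsto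
    rw [Real.zero_rpow (by linarith)] at this
    simpa using (this.div_const 2).mono_left nhdsWithin_le_nhds
  refine squeeze_zero_norm' ?_ hpow
  filter_upwards [self_mem_nhdsWithin] with t (ht : 0 < t)
  rw [norm_lowerGammaTwo_mul_cpow ht, Real.rpow_add ht, Real.rpow_two]
  have := mul_le_mul_of_nonneg_right (lowerGammaTwo_le_sq_div_two ht.le)
    (Real.rpow_nonneg ht.le z.re)
  linarith

lemma tendsto_lowerGammaTwo_mul_cpow_atTop {z : ℂ} (hz : z.re < 0) :
    Tendsto (fun t : ℝ => (lowerGammaTwo t : ℂ) * (t : ℂ) ^ z) atTop (𝓝 0) := by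
  refine squeeze_zero_norm' ?_ (by simpa using tendsto_rpow_neg_atTop (neg_pos.2 hz))
  filter_upwards [eventually_gt_atTop 0] with t ht
  rw [norm_lowerGammaTwo_mul_cpow ht]
  exact mul_le_of_le_one_left (Real.rpow_nonneg ht.le _) (lowerGammaTwo_le_one (by linarith))

/-- Integration by parts against `t ^ (-s)` turns the Mellin integral of `γ(2, ·)` into
Euler's integral for `Γ(2 - s)`. -/
theorem mellin_lowerGammaTwo {s : ℂ} (hs0 : 0 < s.re) (hs2 : s.re < 2) :
    mellin (fun t => (lowerGammaTwo t : ℂ)) (-s) = Complex.Gamma (2 - s) / s := by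
  have hs : s ≠ 0 := by rintro rfl; simp at hs0
  have hre : 0 < (2 - s).re := by rw [sub_re, re_ofNat]; linarith
  have hu (t : ℝ) : HasDerivAt (fun t => (lowerGammaTwo t : ℂ)) ((t * Real.exp (-t) : ℝ) : ℂ) t :=
    (hasDerivAt_lowerGammaTwo t).ofReal_comp
  have hv : ∀ t ∈ Ioi (0 : ℝ),
      HasDerivAt (fun t : ℝ => (t : ℂ) ^ (-s)) (-s * (t : ℂ) ^ (-s - 1)) t := fun t ht =>
    (hasStrictDerivAt_cpow_const (ofReal_mem_slitPlane.2 ht)).hasDerivAt.comp_ofReal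
  have hpow : ∀ t ∈ Ioi (0 : ℝ), ((t * Real.exp (-t) : ℝ) : ℂ) * (t : ℂ) ^ (-s) =
      (Real.exp (-t) : ℂ) * (t : ℂ) ^ (2 - s - 1) := fun t ht => by
    rw [show (2 : ℂ) - s - 1 = 1 + -s by ring,
      cpow_add _ _ (ofReal_ne_zero.2 (ne_of_gt ht)), cpow_one]
    push_cast; ring
  have hmellin : IntegrableOn (fun t : ℝ => (t : ℂ) ^ (-s - 1) * (lowerGammaTwo t : ℂ)) (Ioi 0) :=
    mellinConvergent_lowerGammaTwo hs0 hs2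
  have hGamma : IntegrableOn (fun t => ((t * Real.exp (-t) : ℝ) : ℂ) * (t : ℂ) ^ (-s)) (Ioi 0) :=
    (GammaIntegral_convergent hre).congr_fun (fun t ht => (hpow t ht).symm) measurableSet_Ioi
  have hparts := integral_Ioi_mul_deriv_eq_deriv_mul (fun t _ => hu t) hv
    (IntegrableOn.congr_fun (hmellin.const_mul (-s)) (fun t _ => by simp only [Pi.mul_apply]; ring)
      measurableSet_Ioi) hGamma
    (tendsto_lowerGammaTwo_mul_cpow_nhdsGT_zero (by rw [neg_re]; linarith))
    (tendsto_lowerGammaTwo_mul_cpow_atTop (by simpa using hs0))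
  rw [setIntegral_congr_fun measurableSet_Ioi hpow, ← GammaIntegral,
    ← Gamma_eq_integral hre] at hparts
  have hlhs : ∫ t in Ioi (0 : ℝ), (lowerGammaTwo t : ℂ) * (-s * (t : ℂ) ^ (-s - 1)) =
      -s * mellin (fun t => (lowerGammaTwo t : ℂ)) (-s) := by
    rw [mellin, ← integral_const_mul]
    simp only [smul_eq_mul, mul_left_comm, mul_comm]
  rw [eq_div_iff hs]
  linear_combination -(hlhs.symm.trans hparts)

/-- The paper's `u ↦ f(e^u) e^{-ρu}` after the substitution `u = y log a`. -/
noncomputable def poissonSummand (a ρ y : ℝ) : ℝ := lowerGammaTwo (a ^ y) * a ^ (-ρ * y)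

lemma poissonSummand_pos {a : ℝ} (ha : 0 < a) (ρ y : ℝ) : 0 < poissonSummand a ρ y :=
  mul_pos (lowerGammaTwo_pos (Real.rpow_pos_of_pos ha y)) (Real.rpow_pos_of_pos ha _)

lemma continuous_poissonSummand {a : ℝ} (ha : 0 < a) (ρ : ℝ) :
    Continuous (poissonSummand a ρ) := by
  have hpow {g : ℝ → ℝ} (hg : Continuous g) : Continuous fun y => a ^ g y :=
    continuous_const.rpow hg fun _ => Or.inl ha.ne'
  exact (continuous_lowerGammaTwo.comp (hpow continuous_id)).mul (hpow (by fun_prop))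

lemma poissonSummand_add_le_exp {a ρ : ℝ} (ha : 1 < a) (hρ0 : 0 ≤ ρ) (hρ2 : ρ ≤ 2) (x y : ℝ) :
    poissonSummand a ρ (x + y) ≤
      Real.exp (min ρ (2 - ρ) * Real.log a * |x|) *
        Real.exp (-(min ρ (2 - ρ) * Real.log a) * |y|) := by
  have hL : 0 < Real.log a := Real.log_pos ha
  have hpow (z : ℝ) : a ^ z = Real.exp (Real.log a * z) := Real.rpow_def_of_pos (by linarith) z
  calc poissonSummand a ρ (x + y)
      = lowerGammaTwo (Real.exp (Real.log a * (x + y))) *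
          Real.exp (-ρ * (Real.log a * (x + y))) := by
        rw [poissonSummand, hpow, hpow]; ring_nf
    _ ≤ Real.exp (-min ρ (2 - ρ) * |Real.log a * (x + y)|) := lowerGammaTwo_exp_mul_exp_le ρ _
    _ ≤ _ := by
        rw [← Real.exp_add, Real.exp_le_exp, abs_mul, abs_of_pos hL]
        have htriangle : |y| ≤ |x + y| + |x| := by simpa using abs_add_le (x + y) (-x)
        have := mul_le_mul_of_nonneg_left htriangle
          (mul_nonneg (le_min hρ0 (sub_nonneg.2 hρ2)) hL.le)
        linarith

theorem isBigO_poissonSummand_add {a ρ : ℝ} (ha : 1 < a) (hρ0 : 0 < ρ) (hρ2 : ρ < 2) (x b : ℝ) :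
    (fun y => (poissonSummand a ρ (x + y) : ℂ)) =O[cocompact ℝ] (|·| ^ (-b)) :=
  isBigO_cocompact_rpow_neg_of_norm_le_exp (c := min ρ (2 - ρ) * Real.log a)
    (mul_pos (lt_min hρ0 (by linarith)) (Real.log_pos ha)) (fun y => by
      rw [norm_real, Real.norm_of_nonneg (poissonSummand_pos (by linarith) ρ _).le]
      exact poissonSummand_add_le_exp ha hρ0.le hρ2.le x y) b

theorem summable_poissonSummand_add {a ρ : ℝ} (ha : 1 < a) (hρ0 : 0 < ρ) (hρ2 : ρ < 2) (x : ℝ) :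
    Summable fun n : ℤ => poissonSummand a ρ (x + n) :=
  summable_ofReal.1 <| summable_int_of_isBigO_cocompact_rpow
    (f := fun y => (poissonSummand a ρ (x + y) : ℂ)) one_lt_two
    (isBigO_poissonSummand_add ha hρ0 hρ2 x 2)

theorem fourier_poissonSummand {a ρ : ℝ} (ha : 1 < a) (hρ0 : 0 < ρ) (hρ2 : ρ < 2) (ξ : ℝ) :
    𝓕 (fun y => (poissonSummand a ρ y : ℂ)) ξ =
      Complex.Gamma (2 - (ρ + 2 * π * I * ξ / Real.log a)) / (ρ + 2 * π * I * ξ / Real.log a) /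
        Real.log a := by
  have hL : 0 < Real.log a := Real.log_pos ha
  set s : ℂ := ρ + 2 * π * I * ξ / Real.log a
  have hsre : s.re = ρ := by simp [s]
  have hsim : s.im = 2 * π * ξ / Real.log a := by simp [s]
  set φ : ℝ → ℂ := fun u => Real.exp (-(-s).re * u) • (lowerGammaTwo (Real.exp (-u)) : ℂ)
  have hsummand : (fun y => (poissonSummand a ρ y : ℂ)) = fun y => φ (-Real.log a * y) := by
    ext y
    simp only [φ, poissonSummand, Real.rpow_def_of_pos (by linarith : (0 : ℝ) < a), neg_re,
      hsre, real_smul, ofReal_mul]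
    ring_nf
  have hmellin : mellin (fun t => (lowerGammaTwo t : ℂ)) (-s) = 𝓕 φ ((-s).im / (2 * π)) :=
    mellin_eq_fourier _
  rw [hsummand, Real.fourier_comp_mul_left φ (neg_ne_zero.2 hL.ne'), abs_neg, abs_of_pos hL,
    show ξ / -Real.log a = (-s).im / (2 * π) by rw [neg_im, hsim]; field_simp,
    ← hmellin, mellin_lowerGammaTwo (by linarith) (by linarith), real_smul]
  push_cast
  ring

theorem isBigO_fourier_poissonSummand {a ρ : ℝ} (ha : 1 < a) (hρ0 : 0 < ρ) (hρ2 : ρ < 2) :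
    𝓕 (fun y => (poissonSummand a ρ y : ℂ)) =O[cocompact ℝ] (|·| ^ (-2 : ℝ)) := by
  have hL : 0 < Real.log a := Real.log_pos ha
  refine isBigO_cocompact_rpow_neg_of_norm_mul_rpow_le
    (C := Real.Gamma (4 - ρ) * Real.log a / (2 * π) ^ 2) fun ξ => ?_
  set s : ℂ := ρ + 2 * π * I * ξ / Real.log a
  have hsre : s.re = ρ := by simp [s]
  have hsim : s.im = 2 * π * ξ / Real.log a := by simp [s]
  have hbound := norm_Gamma_two_sub_div_mul_im_sq_le (s := s) (by rw [hsre]; linarith)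
  rw [hsre, hsim] at hbound
  rw [fourier_poissonSummand ha hρ0 hρ2, Real.rpow_two, sq_abs, norm_div, norm_real,
    Real.norm_of_nonneg hL.le, le_div_iff₀ (by positivity)]
  calc ‖Gamma (2 - s) / s‖ / Real.log a * ξ ^ 2 * (2 * π) ^ 2
      = ‖Gamma (2 - s) / s‖ * (2 * π * ξ / Real.log a) ^ 2 * Real.log a := by
        field_simp
    _ ≤ Real.Gamma (4 - ρ) * Real.log a := by gcongr

theorem tsum_fourier_poissonSummand {a ρ : ℝ} (ha : 1 < a) (hρ0 : 0 < ρ) (hρ2 : ρ < 2) (x : ℝ) :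
    ∑' k : ℤ, 𝓕 (fun y => (poissonSummand a ρ y : ℂ)) k * fourier k (x : UnitAddCircle) =
      ∑' n : ℤ, (poissonSummand a ρ (x + n) : ℂ) := by
  have hdecay := isBigO_poissonSummand_add ha hρ0 hρ2 0 2
  simp only [zero_add] at hdecay
  exact (Real.tsum_eq_tsum_fourier_of_rpow_decay
    (continuous_ofReal.comp (continuous_poissonSummand (by linarith) ρ)) one_lt_two hdecay
    (isBigO_fourier_poissonSummand ha hρ0 hρ2) x).symm

/-- **Positivity of the periodic function for the mean, via Poisson summation.**
With `χ_k = 2πik/log a` and `f(t) = 1-(t+1)e^{-t}`, for every real `x` the series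
`∑_{k∈ℤ} (Γ(2-ρ-χ_k)/(ρ+χ_k)) e^{2πikx}` converges absolutely and equals
`(log a)·∑_{v∈ℤ} f(a^{x-v}) a^{-ρ(x-v)}`, which is a positive real number. -/
theorem gamma_series_poisson_summation_f
    (ρ a : ℝ) (hρ1 : 1 ≤ ρ) (hρ2 : ρ < 2) (ha : 1 < a)
    (χ : ℤ → ℂ) (hχ : ∀ k, χ k = (2 * Real.pi * Complex.I * k) / (Real.log a : ℂ))
    (f : ℝ → ℝ) (hf : ∀ t, f t = 1 - (t + 1) * Real.exp (-t)) (x : ℝ) :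
    Summable (fun k : ℤ =>
      ‖Complex.Gamma (2 - ρ - χ k) / ((ρ : ℂ) + χ k) *
        Complex.exp (2 * Real.pi * Complex.I * k * x)‖) ∧
    (∑' k : ℤ, Complex.Gamma (2 - ρ - χ k) / ((ρ : ℂ) + χ k) *
        Complex.exp (2 * Real.pi * Complex.I * k * x))
      = ((Real.log a * ∑' v : ℤ, f (a ^ (x - v)) * a ^ (-ρ * (x - v)) : ℝ) : ℂ) ∧
    0 < Real.log a * ∑' v : ℤ, f (a ^ (x - v)) * a ^ (-ρ * (x - v)) := by
  obtain rfl : f = lowerGammaTwo := funext hf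
  have hρ0 : 0 < ρ := by linarith
  have hL : 0 < Real.log a := Real.log_pos ha
  have hcoeff (k : ℤ) : Complex.Gamma (2 - ρ - χ k) / ((ρ : ℂ) + χ k) =
      Real.log a * 𝓕 (fun y => (poissonSummand a ρ y : ℂ)) k := by
    rw [fourier_poissonSummand ha hρ0 hρ2, hχ, sub_sub, ofReal_intCast,
      mul_div_cancel₀ _ (ofReal_ne_zero.2 hL.ne')]
  have hfourier (k : ℤ) : Complex.exp (2 * π * I * k * x) = fourier k (x : UnitAddCircle) := by
    simp
  refine ⟨?_, ?_, ?_⟩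
  · have hnorm (k : ℤ) : ‖Complex.exp (2 * π * I * k * x)‖ = 1 := by simp [norm_exp]
    simp_rw [norm_mul, hnorm, mul_one, hcoeff, norm_mul, norm_real]
    exact (summable_int_of_isBigO_cocompact_rpow one_lt_two
      (isBigO_fourier_poissonSummand ha hρ0 hρ2).norm_left).mul_left _
  · simp_rw [hcoeff, hfourier, mul_assoc, tsum_mul_left, tsum_fourier_poissonSummand ha hρ0 hρ2,
      ofReal_mul, ofReal_tsum]
    exact congrArg _ (tsum_int_sub_eq_tsum_add (fun y => (poissonSummand a ρ y : ℂ)) x).symm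
  · change 0 < _ * ∑' v : ℤ, poissonSummand a ρ (x - v)
    rw [tsum_int_sub_eq_tsum_add (poissonSummand a ρ)]
    exact mul_pos hL ((summable_poissonSummand_add ha hρ0 hρ2 x).tsum_pos
      (fun _ => (poissonSummand_pos (by linarith) ρ _).le) 0 (poissonSummand_pos (by linarith) ρ _))
end

section
/- Let 1 ≤ ρ < 2 and a > 1, and set χ_k = 2πik/log a for k ∈ ℤ. Then for every real x, the series Σ_{k ∈ ℤ} Γ(2-ρ-χ_k) e^{2πikx} converges absolutely and equals (log a) · Σ_{v ∈ ℤ} exp(-a^{x-v}) · a^{(2-ρ)(x-v)}; in particular this sum is a positive real number for every x. -/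
/-!
Put `L = log a` and `g(u) = exp(-a^u) a^{σu}` with `σ = 2 - ρ > 0`. The substitution `t = a^u`
turns the Fourier transform of `g` into the Mellin transform of `t ↦ e^{-t} t^σ`, so
`𝓕 g (k) = L⁻¹ Γ(σ - 2πik/L)`. Since `g` decays exponentially at both ends and
`|Γ(σ + iy)| ≤ Γ(σ + 2) / y²`, Poisson summation applies and gives the identity; the
right-hand side is a convergent series of positive terms.
-/

open Complex MeasureTheory Filter Asymptotics
open scoped FourierTransform Real

namespace Complex

theorem norm_Gamma_le_Gamma_re_s9 {s : ℂ} (hs : 0 < s.re) : ‖Gamma s‖ ≤ Real.Gamma s.re := by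
  rw [Gamma_eq_integral hs, GammaIntegral, Real.Gamma_eq_integral hs]
  refine (norm_integral_le_integral_norm _).trans_eq (setIntegral_congr_fun measurableSet_Ioi
    fun t ht => ?_)
  simp [norm_cpow_eq_rpow_re_of_pos ht, -ofReal_exp, norm_real]

theorem norm_Gamma_mul_im_sq_le {s : ℂ} (hs : 0 < s.re) :
    ‖Gamma s‖ * s.im ^ 2 ≤ Real.Gamma (s.re + 2) := by
  have hs0 : s ≠ 0 := fun h => by simp [h] at hs
  have hs1 : s + 1 ≠ 0 := fun h => by
    have := congrArg re h; simp only [add_re, one_re, zero_re] at this; linarith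
  have him : |s.im| ≤ ‖s + 1‖ := by simpa using abs_im_le_norm (s + 1)
  calc ‖Gamma s‖ * s.im ^ 2 = |s.im| * (|s.im| * ‖Gamma s‖) := by rw [← sq_abs]; ring
    _ ≤ ‖s + 1‖ * (‖s‖ * ‖Gamma s‖) := by gcongr; exact abs_im_le_norm s
    _ = ‖Gamma (s + 2)‖ := by
      rw [← norm_mul, ← norm_mul, ← Gamma_add_one s hs0, ← Gamma_add_one _ hs1, add_assoc,
        one_add_one_eq_two]
    _ ≤ Real.Gamma (s.re + 2) := by
      simpa using norm_Gamma_le_Gamma_re_s9 (s := s + 2) (by simp; linarith)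

theorem summable_norm_Gamma_add_int_mul_I {σ t : ℝ} (hσ : 0 < σ) (ht : t ≠ 0) :
    Summable fun k : ℤ => ‖Gamma (σ + k * t * I)‖ := by
  refine Summable.of_norm_bounded_eventually
    ((Real.summable_one_div_int_pow.2 one_lt_two).mul_left (Real.Gamma (σ + 2) / t ^ 2)) ?_
  filter_upwards [eventually_cofinite_ne 0] with k hk
  have hkt : 0 < ((k : ℝ) * t) ^ 2 := by positivity
  have := norm_Gamma_mul_im_sq_le (s := σ + k * t * I) (by simpa using hσ)
  rw [norm_norm, div_mul_div_comm, mul_one, ← mul_pow, mul_comm t, le_div_iff₀ hkt]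
  simpa using this

theorem summable_norm_Gamma_sub_mul_int {σ L : ℝ} (hσ : 0 < σ) (hL : L ≠ 0) :
    Summable fun k : ℤ => ‖Gamma (σ - 2 * π * I * k / L)‖ := by
  refine (summable_norm_Gamma_add_int_mul_I (t := -(2 * π / L)) hσ
    (by simp [hL, Real.pi_ne_zero])).congr fun k => ?_
  push_cast
  ring_nf

end Complex

theorem summable_comp_add_int_of_isBigO_rpow {E : Type*} [NormedAddCommGroup E] [CompleteSpace E]
    {f : ℝ → E} (hc : Continuous f) {b : ℝ} (hb : 1 < b)
    (hf : f =O[cocompact ℝ] fun u => |u| ^ (-b)) (x : ℝ) :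
    Summable fun n : ℤ => f (x + n) := by
  let K : TopologicalSpace.Compacts ℝ := ⟨{x}, isCompact_singleton⟩
  have := summable_of_isBigO (Real.summable_abs_int_rpow hb)
    ((isBigO_norm_restrict_cocompact ⟨f, hc⟩ (by linarith) hf K).comp_tendsto
      Int.tendsto_coe_cofinite)
  refine this.of_norm_bounded fun n => ?_
  exact ContinuousMap.norm_coe_le_norm ((ContinuousMap.mk f hc).comp
    (ContinuousMap.addRight (n : ℝ)) |>.restrict K) ⟨x, rfl⟩

theorem Real.mul_sub_exp_le (σ : ℝ) {w : ℝ} (hw : 0 ≤ w) :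
    σ * w - Real.exp w ≤ (σ + 1) ^ 2 / 2 - w := by
  nlinarith [Real.quadratic_le_exp_of_nonneg hw, sq_nonneg (w - σ - 1)]

theorem mellin_cpow_smul_exp_neg {σ : ℝ} {z : ℂ} (hz : 0 < z.re + σ) :
    mellin (fun t : ℝ => (t : ℂ) ^ (σ : ℂ) • ((Real.exp (-t) : ℝ) : ℂ)) z
      = Gamma (z + σ) := by
  rw [mellin_cpow_smul, ← GammaIntegral_eq_mellin, Gamma_eq_integral (by simpa using hz)]

noncomputable def gammaPoissonKernel (a σ u : ℝ) : ℝ :=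
  Real.exp (-(a ^ u)) * a ^ (σ * u)

namespace gammaPoissonKernel

variable {a σ : ℝ}

theorem eq_exp (ha : 0 < a) (u : ℝ) :
    gammaPoissonKernel a σ u = Real.exp (σ * (Real.log a * u) - Real.exp (Real.log a * u)) := by
  rw [gammaPoissonKernel, Real.rpow_def_of_pos ha, Real.rpow_def_of_pos ha, ← Real.exp_add]
  ring_nf

theorem pos (ha : 0 < a) (u : ℝ) : 0 < gammaPoissonKernel a σ u := by
  rw [eq_exp ha]; positivity

theorem continuous (ha : 0 < a) : Continuous (gammaPoissonKernel a σ) := by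
  simp_rw [funext (eq_exp (σ := σ) ha)]
  fun_prop

theorem le_exp_neg_abs (ha : 1 < a) (u : ℝ) :
    gammaPoissonKernel a σ u
      ≤ Real.exp ((σ + 1) ^ 2 / 2) * Real.exp (-(min σ 1 * Real.log a) * |u|) := by
  have hL := Real.log_pos ha
  rw [eq_exp (by linarith), ← Real.exp_add, Real.exp_le_exp]
  rcases le_or_gt 0 u with hu | hu
  · have := Real.mul_sub_exp_le σ (mul_nonneg hL.le hu)
    rw [abs_of_nonneg hu]
    nlinarith [min_le_right σ 1, mul_nonneg hL.le hu]
  · rw [abs_of_neg hu]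
    nlinarith [Real.exp_pos (Real.log a * u), sq_nonneg (σ + 1),
      mul_nonpos_of_nonneg_of_nonpos (sub_nonneg.2 (min_le_left σ 1))
        (mul_neg_of_pos_of_neg hL hu).le]

theorem isBigO_abs_rpow (ha : 1 < a) (hσ : 0 < σ) (b : ℝ) :
    gammaPoissonKernel a σ =O[cocompact ℝ] fun u => |u| ^ b := by
  have hc : 0 < min σ 1 * Real.log a := mul_pos (lt_min hσ one_pos) (Real.log_pos ha)
  have hdecay : (fun u : ℝ => Real.exp (-(min σ 1 * Real.log a) * |u|)) =o[cocompact ℝ]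
      fun u => |u| ^ b := by
    rw [cocompact_eq_atBot_atTop, ← comap_abs_atTop]
    exact (isLittleO_exp_neg_mul_rpow_atTop hc b).comp_tendsto tendsto_comap
  refine (IsBigO.of_bound (Real.exp ((σ + 1) ^ 2 / 2)) (Eventually.of_forall fun u => ?_)).trans
    hdecay.isBigO
  rw [Real.norm_of_nonneg (pos (by linarith) u).le, Real.norm_of_nonneg (Real.exp_pos _).le]
  exact le_exp_neg_abs ha u

theorem fourier_ofReal (ha : 1 < a) (hσ : 0 < σ) (ξ : ℝ) :
    𝓕 (fun u => (gammaPoissonKernel a σ u : ℂ)) ξ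
      = (Real.log a : ℂ)⁻¹ * Gamma (σ - 2 * π * I * ξ / Real.log a) := by
  set L := Real.log a
  have hL : 0 < L := Real.log_pos ha
  set f : ℝ → ℂ := fun t => (t : ℂ) ^ (σ : ℂ) • ((Real.exp (-t) : ℝ) : ℂ)
  set s : ℂ := ((2 * π * ξ : ℝ) : ℂ) * I
  -- the kernel is `t ↦ f (t ^ (-L))` read through `t = e^{-u}`, as in `mellin_eq_fourier`
  have hkernel : (fun u : ℝ => Real.exp (-s.re * u) • f (Real.exp (-u) ^ (-L)))
      = fun u => (gammaPoissonKernel a σ u : ℂ) := by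
    funext u
    have : Real.exp (-u) ^ (-L) = a ^ u := by
      rw [← Real.exp_mul, Real.rpow_def_of_pos (by linarith), neg_mul_neg, mul_comm]
    simp only [s, f, this, gammaPoissonKernel, mul_re, ofReal_re, I_re, ofReal_im, I_im]
    rw [← ofReal_cpow (by positivity), ← Real.rpow_mul (by linarith)]
    simp [mul_comm]
  have hξ : s.im / (2 * π) = ξ := by simp [s]
  have hsL : s / ((-L : ℝ) : ℂ) = -(2 * π * I * ξ / L) := by
    have : (L : ℂ) ≠ 0 := ofReal_ne_zero.2 hL.ne'
    simp only [s]; push_cast; field_simp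
  have hmellin := mellin_eq_fourier (fun t : ℝ => f (t ^ (-L))) (s := s)
  rw [hkernel, hξ, mellin_comp_rpow, mellin_cpow_smul_exp_neg, hsL, abs_neg, abs_of_pos hL]
    at hmellin
  · rw [← hmellin, real_smul]; push_cast; ring_nf
  · rw [hsL]; simpa [div_re] using hσ

theorem summable_sub_int (ha : 1 < a) (hσ : 0 < σ) (x : ℝ) :
    Summable fun v : ℤ => gammaPoissonKernel a σ (x - v) := by
  refine ((summable_comp_add_int_of_isBigO_rpow (continuous (by linarith)) one_lt_two
    (isBigO_abs_rpow ha hσ (-2)) x).comp_injective neg_injective).congr fun v => ?_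
  simp only [Function.comp_apply, Int.cast_neg, sub_eq_add_neg]

theorem tsum_sub_int_pos (ha : 1 < a) (hσ : 0 < σ) (x : ℝ) :
    0 < ∑' v : ℤ, gammaPoissonKernel a σ (x - v) :=
  (summable_sub_int ha hσ x).tsum_pos (fun _ => (pos (by linarith) _).le) 0 (pos (by linarith) _)

theorem tsum_Gamma_mul_exp_eq (ha : 1 < a) (hσ : 0 < σ) (x : ℝ) :
    ∑' k : ℤ, Gamma (σ - 2 * π * I * k / Real.log a) * exp (2 * π * I * k * x)
      = ((Real.log a * ∑' v : ℤ, gammaPoissonKernel a σ (x - v) : ℝ) : ℂ) := by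
  have hL : 0 < Real.log a := Real.log_pos ha
  set g : ℝ → ℂ := fun u => (gammaPoissonKernel a σ u : ℂ)
  have hFg (k : ℤ) :
      𝓕 g k = (Real.log a : ℂ)⁻¹ * Gamma (σ - 2 * π * I * k / Real.log a) := by
    rw [fourier_ofReal ha hσ]; push_cast; rfl
  have hpoisson : ∑' n : ℤ, g (x + n) = ∑' n : ℤ, 𝓕 g n * fourier n (x : UnitAddCircle) :=
    Real.tsum_eq_tsum_fourier_of_rpow_decay_of_summable (f := g)
      (continuous_ofReal.comp (continuous (by linarith))) one_lt_two
      (isBigO_ofReal_left.2 (isBigO_abs_rpow ha hσ (-2)))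
      (by simp_rw [hFg]; exact (summable_norm_Gamma_sub_mul_int hσ hL.ne').of_norm.mul_left _) x
  have hlhs :
      ∑' n : ℤ, g (x + n) = ((∑' v : ℤ, gammaPoissonKernel a σ (x - v) : ℝ) : ℂ) := by
    rw [ofReal_tsum, ← tsum_comp_neg]
    refine tsum_congr fun n => ?_
    simp only [g, Int.cast_neg, sub_eq_add_neg]
  have hrhs : ∑' n : ℤ, 𝓕 g n * fourier n (x : UnitAddCircle)
      = (Real.log a : ℂ)⁻¹ * ∑' k : ℤ, Gamma (σ - 2 * π * I * k / Real.log a)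
          * exp (2 * π * I * k * x) := by
    rw [← tsum_mul_left]
    refine tsum_congr fun k => ?_
    rw [hFg, fourier_coe_apply, ofReal_one, div_one, mul_assoc]
  rw [ofReal_mul, ← hlhs, hpoisson, hrhs, ← mul_assoc,
    mul_inv_cancel₀ (ofReal_ne_zero.2 hL.ne'), one_mul]

end gammaPoissonKernel

theorem gamma_series_poisson_summation_general
    (ρ a : ℝ) (hρ2 : ρ < 2) (ha : 1 < a)
    (χ : ℤ → ℂ) (hχ : ∀ k, χ k = (2 * Real.pi * Complex.I * k) / (Real.log a : ℂ))
    (x : ℝ) :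
    Summable (fun k : ℤ =>
      ‖Complex.Gamma (2 - ρ - χ k) * Complex.exp (2 * Real.pi * Complex.I * k * x)‖) ∧
    (∑' k : ℤ, Complex.Gamma (2 - ρ - χ k) * Complex.exp (2 * Real.pi * Complex.I * k * x))
      = ((Real.log a *
          ∑' v : ℤ, Real.exp (-(a ^ (x - v))) * a ^ ((2 - ρ) * (x - v)) : ℝ) : ℂ) ∧
    0 < Real.log a * ∑' v : ℤ, Real.exp (-(a ^ (x - v))) * a ^ ((2 - ρ) * (x - v)) := by
  have hσ : 0 < 2 - ρ := by linarith
  have hL : 0 < Real.log a := Real.log_pos ha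
  have hΓ (k : ℤ) : 2 - ρ - χ k = ((2 - ρ : ℝ) : ℂ) - 2 * π * I * k / Real.log a := by
    rw [hχ]; push_cast; rfl
  have hexp (k : ℤ) : ‖exp (2 * π * I * k * x)‖ = 1 := by
    rw [show 2 * π * I * k * x = ((2 * π * k * x : ℝ) : ℂ) * I by push_cast; ring,
      norm_exp_ofReal_mul_I]
  refine ⟨?_, ?_, mul_pos hL (gammaPoissonKernel.tsum_sub_int_pos ha hσ x)⟩
  · refine (summable_norm_Gamma_sub_mul_int hσ hL.ne').congr fun k => ?_
    rw [norm_mul, hexp, mul_one, hΓ]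
  · simp_rw [hΓ]
    exact gammaPoissonKernel.tsum_Gamma_mul_exp_eq ha hσ x

/-- **Positivity of the periodic function for the variance, via Poisson summation.**
With `χ_k = 2πik/log a`, for every real `x` the series `∑_{k∈ℤ} Γ(2-ρ-χ_k) e^{2πikx}`
converges absolutely and equals `(log a)·∑_{v∈ℤ} exp(-a^{x-v}) a^{(2-ρ)(x-v)}`,
which is a positive real number. -/
theorem gamma_series_poisson_summation
    (ρ a : ℝ) (hρ1 : 1 ≤ ρ) (hρ2 : ρ < 2) (ha : 1 < a)
    (χ : ℤ → ℂ) (hχ : ∀ k, χ k = (2 * Real.pi * Complex.I * k) / (Real.log a : ℂ))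
    (x : ℝ) :
    Summable (fun k : ℤ =>
      ‖Complex.Gamma (2 - ρ - χ k) * Complex.exp (2 * Real.pi * Complex.I * k * x)‖) ∧
    (∑' k : ℤ, Complex.Gamma (2 - ρ - χ k) * Complex.exp (2 * Real.pi * Complex.I * k * x))
      = ((Real.log a *
          ∑' v : ℤ, Real.exp (-(a ^ (x - v))) * a ^ ((2 - ρ) * (x - v)) : ℝ) : ℂ) ∧
    0 < Real.log a * ∑' v : ℤ, Real.exp (-(a ^ (x - v))) * a ^ ((2 - ρ) * (x - v)) :=
  gamma_series_poisson_summation_general ρ a hρ2 ha χ hχ x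
end

section
/- For every complex number s with 0 < Re(s) < 2, the improper integral ∫_0^∞ (1 - (t+1)e^{-t}) · t^{-s-1} dt converges absolutely and equals Γ(2-s)/s. -/
/-!
Write `g t = 1 - (t + 1) e^{-t}`, so that `g' t = t e^{-t}`, and integrate by parts against
`v t = -t^{-s} / s`. The boundary terms `g t t^{-s}` vanish at both ends because
`0 ≤ g t ≤ min 1 t²`, and what remains is `s⁻¹ ∫ e^{-t} t^{1-s} dt = Γ(2 - s) / s`.
-/

open MeasureTheory Set Filter Asymptotics Topology Real

lemma one_sub_add_one_mul_exp_neg_nonneg (t : ℝ) : 0 ≤ 1 - (t + 1) * exp (-t) := by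
  rw [exp_neg, sub_nonneg, mul_inv_le_iff₀ (exp_pos t), one_mul]
  linarith [add_one_le_exp t]

lemma one_sub_add_one_mul_exp_neg_le_one {t : ℝ} (ht : -1 ≤ t) :
    1 - (t + 1) * exp (-t) ≤ 1 := by
  nlinarith [exp_pos (-t)]

lemma one_sub_add_one_mul_exp_neg_le_sq {t : ℝ} (ht : -1 ≤ t) :
    1 - (t + 1) * exp (-t) ≤ t ^ 2 := by
  nlinarith [add_one_le_exp (-t), exp_pos (-t)]

lemma hasDerivAt_one_sub_add_one_mul_exp_neg (t : ℝ) :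
    HasDerivAt (fun u => 1 - (u + 1) * exp (-u)) (t * exp (-t)) t := by
  have h := ((hasDerivAt_id' t).add_const 1).mul (hasDerivAt_neg t).exp
  exact (h.const_sub 1).congr_deriv (by ring)

lemma isBigO_one_sub_add_one_mul_exp_neg_atTop :
    (fun t => 1 - (t + 1) * exp (-t)) =O[atTop] (fun _ => (1 : ℝ)) := by
  refine IsBigO.of_bound 1 ?_
  filter_upwards [eventually_ge_atTop (-1)] with t ht
  rw [norm_one, one_mul, norm_of_nonneg (one_sub_add_one_mul_exp_neg_nonneg t)]
  exact one_sub_add_one_mul_exp_neg_le_one ht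

lemma isBigO_one_sub_add_one_mul_exp_neg_nhds_zero :
    (fun t => 1 - (t + 1) * exp (-t)) =O[𝓝 0] (fun t => t ^ 2) := by
  refine IsBigO.of_bound 1 ?_
  filter_upwards [Ici_mem_nhds (show (-1 : ℝ) < 0 by norm_num)] with t ht
  rw [one_mul, norm_of_nonneg (one_sub_add_one_mul_exp_neg_nonneg t), norm_pow, norm_eq_abs,
    sq_abs]
  exact one_sub_add_one_mul_exp_neg_le_sq ht

lemma mellinConvergent_one_sub_add_one_mul_exp_neg {w : ℂ} (h2 : -2 < w.re) (h0 : w.re < 0) :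
    MellinConvergent (fun t : ℝ => ((1 - (t + 1) * exp (-t) : ℝ) : ℂ)) w := by
  refine mellinConvergent_of_isBigO_rpow (a := 0) (b := -2)
    ((by fun_prop : Continuous _).locallyIntegrable.locallyIntegrableOn _) ?_ h0 ?_ h2
  · exact Complex.isBigO_ofReal_left.2 <|
      isBigO_one_sub_add_one_mul_exp_neg_atTop.congr_right (by simp)
  · exact Complex.isBigO_ofReal_left.2 <|
      (isBigO_one_sub_add_one_mul_exp_neg_nhds_zero.mono nhdsWithin_le_nhds).congr_right
        (by simp)

lemma norm_one_sub_add_one_mul_exp_neg_mul_cpow {t : ℝ} (ht : 0 < t) (s : ℂ) :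
    ‖((1 - (t + 1) * exp (-t) : ℝ) : ℂ) * (t : ℂ) ^ (-s)‖ =
      (1 - (t + 1) * exp (-t)) * t ^ (-s.re) := by
  rw [norm_mul, Complex.norm_real, norm_of_nonneg (one_sub_add_one_mul_exp_neg_nonneg t),
    Complex.norm_cpow_eq_rpow_re_of_pos ht, Complex.neg_re]

lemma tendsto_one_sub_add_one_mul_exp_neg_mul_cpow_nhdsGT_zero {s : ℂ} (hs : s.re < 2) :
    Tendsto (fun t : ℝ => ((1 - (t + 1) * exp (-t) : ℝ) : ℂ) * (t : ℂ) ^ (-s))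
      (𝓝[>] 0) (𝓝 0) := by
  have hpos : 0 < 2 - s.re := by linarith
  have hlim : Tendsto (fun t : ℝ => t ^ (2 - s.re)) (𝓝[>] 0) (𝓝 0) := by
    simpa [zero_rpow hpos.ne'] using
      (continuousAt_rpow_const 0 _ (Or.inr hpos.le)).tendsto.mono_left nhdsWithin_le_nhds
  refine squeeze_zero_norm' ?_ hlim
  filter_upwards [self_mem_nhdsWithin] with t (ht : 0 < t)
  rw [norm_one_sub_add_one_mul_exp_neg_mul_cpow ht, sub_eq_add_neg (2 : ℝ), rpow_add ht,
    rpow_two]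
  gcongr
  exact one_sub_add_one_mul_exp_neg_le_sq (by linarith)

lemma tendsto_one_sub_add_one_mul_exp_neg_mul_cpow_atTop {s : ℂ} (hs : 0 < s.re) :
    Tendsto (fun t : ℝ => ((1 - (t + 1) * exp (-t) : ℝ) : ℂ) * (t : ℂ) ^ (-s))
      atTop (𝓝 0) := by
  refine squeeze_zero_norm' ?_ (tendsto_rpow_neg_atTop hs)
  filter_upwards [eventually_gt_atTop 0] with t ht
  rw [norm_one_sub_add_one_mul_exp_neg_mul_cpow ht]
  exact mul_le_of_le_one_left (rpow_nonneg ht.le _)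
    (one_sub_add_one_mul_exp_neg_le_one (by linarith))

lemma mul_exp_neg_mul_cpow_neg_eq {t : ℝ} (ht : 0 < t) (s : ℂ) :
    ((t * exp (-t) : ℝ) : ℂ) * (t : ℂ) ^ (-s) =
      (exp (-t) : ℂ) * (t : ℂ) ^ (2 - s - 1) := by
  rw [show 2 - s - 1 = 1 + -s by ring, Complex.cpow_add _ _ (by exact_mod_cast ht.ne'),
    Complex.cpow_one]
  push_cast
  ring

lemma integrableOn_mul_exp_neg_mul_cpow_neg {s : ℂ} (hs : s.re < 2) :
    IntegrableOn (fun t : ℝ => ((t * exp (-t) : ℝ) : ℂ) * (t : ℂ) ^ (-s)) (Ioi 0) :=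
  (Complex.GammaIntegral_convergent (by simpa using hs)).congr_fun
    (fun _ ht => (mul_exp_neg_mul_cpow_neg_eq ht s).symm) measurableSet_Ioi

lemma integral_mul_exp_neg_mul_cpow_neg {s : ℂ} (hs : s.re < 2) :
    ∫ t in Ioi 0, ((t * exp (-t) : ℝ) : ℂ) * (t : ℂ) ^ (-s) = Complex.Gamma (2 - s) := by
  rw [Complex.Gamma_eq_integral (by simpa using hs), Complex.GammaIntegral]
  exact setIntegral_congr_fun measurableSet_Ioi fun _ ht => mul_exp_neg_mul_cpow_neg_eq ht s

/-- **A Mellin-type integral for the Gamma function**: for `0 < Re(s) < 2`,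
`∫_0^∞ (1-(t+1)e^{-t}) t^{-s-1} dt` converges absolutely and equals `Γ(2-s)/s`. -/
theorem integral_one_sub_add_one_mul_exp_neg_mul_cpow
    (s : ℂ) (h0 : 0 < s.re) (h2 : s.re < 2) :
    IntegrableOn
      (fun t : ℝ => ((1 - (t + 1) * Real.exp (-t) : ℝ) : ℂ) * (t : ℂ) ^ (-s - 1))
      (Set.Ioi (0 : ℝ)) ∧
    (∫ t in Set.Ioi (0 : ℝ),
        ((1 - (t + 1) * Real.exp (-t) : ℝ) : ℂ) * (t : ℂ) ^ (-s - 1))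
      = Complex.Gamma (2 - s) / s := by
  have hs : s ≠ 0 := fun h => by simp [h] at h0
  have hint : IntegrableOn
      (fun t : ℝ => ((1 - (t + 1) * Real.exp (-t) : ℝ) : ℂ) * (t : ℂ) ^ (-s - 1)) (Ioi 0) :=
    (mellinConvergent_one_sub_add_one_mul_exp_neg (w := -s)
      (by rw [Complex.neg_re]; linarith) (by rw [Complex.neg_re]; linarith)).congr_fun
      (fun _ _ => mul_comm _ _) measurableSet_Ioi
  refine ⟨hint, ?_⟩
  have hu (t : ℝ) : HasDerivAt (fun u : ℝ => ((1 - (u + 1) * exp (-u) : ℝ) : ℂ))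
      ((t * exp (-t) : ℝ) : ℂ) t :=
    (hasDerivAt_one_sub_add_one_mul_exp_neg t).ofReal_comp
  have hv (t : ℝ) (ht : t ∈ Ioi 0) : HasDerivAt (fun u : ℝ => -(u : ℂ) ^ (-s) / s)
      ((t : ℂ) ^ (-s - 1)) t :=
    ((hasDerivAt_ofReal_cpow_const (ne_of_gt ht) (neg_ne_zero.2 hs)).neg.div_const s).congr_deriv
      (by field_simp)
  rw [integral_Ioi_mul_deriv_eq_deriv_mul (a' := 0) (b' := 0) (fun t _ => hu t) hv hint ?_ ?_ ?_]
  · simp_rw [mul_div_assoc', mul_neg, neg_div, integral_neg, integral_div,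
      integral_mul_exp_neg_mul_cpow_neg h2]
    ring
  · exact IntegrableOn.congr_fun ((integrableOn_mul_exp_neg_mul_cpow_neg h2).neg.div_const s)
      (fun t _ => by simp [mul_neg, mul_div_assoc', neg_div]) measurableSet_Ioi
  · simpa [Pi.mul_def, mul_neg, mul_div_assoc'] using
      (tendsto_one_sub_add_one_mul_exp_neg_mul_cpow_nhdsGT_zero h2).neg.div_const s
  · simpa [Pi.mul_def, mul_neg, mul_div_assoc'] using
      (tendsto_one_sub_add_one_mul_exp_neg_mul_cpow_atTop h0).neg.div_const s
end

section
/- Let p_1,…,p_A be positive reals with p_1 + … + p_A = 1 and let ρ be a real number. Then Σ_{j=1}^A p_j^{2ρ-1}(1-p_j) - Σ_{j_1 ≠ j_2} p_{j_1}^ρ p_{j_2}^ρ = Σ_{1 ≤ j_1 < j_2 ≤ A} p_{j_1} p_{j_2} (p_{j_1}^{ρ-1} - p_{j_2}^{ρ-1})^2. In particular, if ρ > 1 and the p_j are not all equal, this common value is strictly positive. -/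
/-! Writing `q j = p j ^ (ρ - 1)`, we have `p j ^ ρ = p j q j` and
`p j ^ (2ρ - 1) = p j q j ^ 2`, so by `∑ p = 1` the left side is the weighted variance
`(∑ p)(∑ p q²) - (∑ p q)²`, which Lagrange's identity writes as
`∑_{j₁<j₂} p_{j₁} p_{j₂} (q_{j₁} - q_{j₂})²`. For `ρ > 1` the map `t ↦ t ^ (ρ - 1)` is injective
on `t > 0`, so unequal `p_j` give a nonzero square. -/

open Finset

namespace Finset

variable {ι M : Type*} [AddCommMonoid M]

theorem sum_diag_add_sum_offDiag [DecidableEq ι] (s : Finset ι) (f : ι × ι → M) :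
    ∑ i ∈ s, f (i, i) + ∑ x ∈ s.offDiag, f x = ∑ x ∈ s ×ˢ s, f x := by
  rw [← diag_union_offDiag, sum_union (disjoint_diag_offDiag s), sum_diag]

theorem sum_offDiag_eq_sum_lt_add_swap [LinearOrder ι] (s : Finset ι) (f : ι × ι → M) :
    ∑ x ∈ s.offDiag, f x = ∑ x ∈ s.offDiag with x.1 < x.2, (f x + f x.swap) := by
  rw [sum_add_distrib, ← sum_filter_add_sum_filter_not s.offDiag (fun x => x.1 < x.2)]
  congr 1
  refine sum_nbij' Prod.swap Prod.swap ?_ ?_ (by simp) (by simp) (by simp)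
  · intro x hx
    simp only [mem_filter, mem_offDiag] at hx ⊢
    exact ⟨⟨hx.1.2.1, hx.1.1, hx.1.2.2.symm⟩, lt_of_le_of_ne (not_lt.1 hx.2) hx.1.2.2.symm⟩
  · intro x hx
    simp only [mem_filter, mem_offDiag] at hx ⊢
    exact ⟨⟨hx.1.2.1, hx.1.1, hx.1.2.2.symm⟩, hx.2.not_gt⟩

end Finset

section Lagrange

variable {ι R : Type*} [Fintype ι] [LinearOrder ι]

theorem sum_lt_mul_mul_sub_sq [CommRing R] (w q : ι → R) :
    ∑ x ∈ univ.filter (fun x : ι × ι => x.1 < x.2), w x.1 * w x.2 * (q x.1 - q x.2) ^ 2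
      = (∑ i, w i) * ∑ i, w i * q i ^ 2 - (∑ i, w i * q i) ^ 2 := by
  -- `f` vanishes on the diagonal, `f x + f x.swap` is the summand on the left, and the full
  -- double sum of `f` is the right side.
  let f : ι × ι → R := fun x => w x.1 * w x.2 * (q x.1 * (q x.1 - q x.2))
  have hlt : univ.filter (fun x : ι × ι => x.1 < x.2)
      = univ.offDiag.filter (fun x => x.1 < x.2) := by
    ext x
    simpa using fun h : x.1 < x.2 => h.ne
  have hf := sum_diag_add_sum_offDiag univ f
  have hf_diag : ∑ i, f (i, i) = 0 := sum_eq_zero fun i _ => by simp [f]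
  rw [hf_diag, zero_add, sum_offDiag_eq_sum_lt_add_swap, ← hlt, univ_product_univ,
    Fintype.sum_prod_type] at hf
  calc _ = ∑ x ∈ univ.filter (fun x : ι × ι => x.1 < x.2), (f x + f x.swap) :=
        sum_congr rfl fun x _ => by simp only [f, Prod.fst_swap, Prod.snd_swap]; ring
    _ = ∑ i, ∑ j, f (i, j) := hf
    _ = _ := by
        simp only [f, sq, mul_sub, sum_sub_distrib, mul_sum, sum_mul]
        congr 1 <;> exact sum_congr rfl fun i _ => sum_congr rfl fun j _ => by ring

theorem sum_lt_mul_mul_sub_sq_pos [CommRing R] [LinearOrder R] [IsStrictOrderedRing R]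
    {w q : ι → R} (hw : ∀ i, 0 < w i) (hq : ∃ i j, q i ≠ q j) :
    0 < ∑ x ∈ univ.filter (fun x : ι × ι => x.1 < x.2),
      w x.1 * w x.2 * (q x.1 - q x.2) ^ 2 := by
  obtain ⟨a, b, hab, hqab⟩ : ∃ a b, a < b ∧ q a ≠ q b := by
    obtain ⟨i, j, hij⟩ := hq
    rcases lt_or_gt_of_ne (ne_of_apply_ne q hij) with h | h
    exacts [⟨i, j, h, hij⟩, ⟨j, i, h, hij.symm⟩]
  refine sum_pos' (fun x _ => mul_nonneg (mul_pos (hw _) (hw _)).le (sq_nonneg _))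
    ⟨(a, b), mem_filter.2 ⟨mem_univ _, hab⟩, ?_⟩
  exact mul_pos (mul_pos (hw a) (hw b)) (sq_pos_of_ne_zero (sub_ne_zero.2 hqab))

end Lagrange

theorem variance_coefficient_sum_of_squares_general
    {A : ℕ}
    (p : Fin A → ℝ) (hp0 : ∀ j, 0 < p j) (hpsum : ∑ j, p j = 1) (ρ : ℝ) :
    (∑ j, p j ^ (2 * ρ - 1) * (1 - p j))
        - ∑ x ∈ Finset.univ.offDiag, p x.1 ^ ρ * p x.2 ^ ρ
      = ∑ x ∈ Finset.univ.filter (fun x : Fin A × Fin A => x.1 < x.2),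
          p x.1 * p x.2 * (p x.1 ^ (ρ - 1) - p x.2 ^ (ρ - 1)) ^ 2 ∧
    (1 < ρ → (∃ j₁ j₂, p j₁ ≠ p j₂) →
      0 < ∑ x ∈ Finset.univ.filter (fun x : Fin A × Fin A => x.1 < x.2),
          p x.1 * p x.2 * (p x.1 ^ (ρ - 1) - p x.2 ^ (ρ - 1)) ^ 2) := by
  have hpow : ∀ j, p j ^ ρ = p j * p j ^ (ρ - 1) := fun j => by
    rw [Real.rpow_sub_one (hp0 j).ne', mul_div_cancel₀ _ (hp0 j).ne']
  have hpow2 : ∀ j, p j ^ (2 * ρ - 1) = p j * (p j ^ (ρ - 1)) ^ 2 := fun j => by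
    rw [sq, ← mul_assoc, ← hpow, ← Real.rpow_add (hp0 j)]
    congr 1
    ring
  have hdiag : ∀ j, p j ^ (2 * ρ - 1) * (1 - p j)
      = p j * (p j ^ (ρ - 1)) ^ 2 - p j ^ ρ * p j ^ ρ := fun j => by rw [hpow2, hpow]; ring
  have hoff : ∑ x ∈ univ.offDiag, p x.1 ^ ρ * p x.2 ^ ρ
      = (∑ j, p j ^ ρ) ^ 2 - ∑ j, p j ^ ρ * p j ^ ρ := by
    rw [sq, sum_mul_sum, ← Fintype.sum_prod_type', ← univ_product_univ,
      ← sum_diag_add_sum_offDiag]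
    ring
  refine ⟨?_, fun hρ hne => sum_lt_mul_mul_sub_sq_pos (q := fun j => p j ^ (ρ - 1)) hp0 ?_⟩
  · rw [sum_lt_mul_mul_sub_sq p fun j => p j ^ (ρ - 1), hpsum, one_mul, hoff]
    simp only [hdiag, sum_sub_distrib, hpow]
    ring
  · obtain ⟨i, j, hij⟩ := hne
    exact ⟨i, j, fun h => hij ((Real.rpow_left_inj (hp0 i).le (hp0 j).le (by linarith)).1 h)⟩

/-- **The coefficient of `n` in the variance is a sum of squares** (Lemma 2, key identity):
`∑_j p_j^{2ρ-1}(1-p_j) - ∑_{j₁≠j₂} p_{j₁}^ρ p_{j₂}^ρ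
  = ∑_{j₁<j₂} p_{j₁}p_{j₂}(p_{j₁}^{ρ-1}-p_{j₂}^{ρ-1})²`,
and this value is strictly positive when `ρ > 1` and the `p_j` are not all equal. -/
theorem variance_coefficient_sum_of_squares
    {A : ℕ} (hA : 2 ≤ A)
    (p : Fin A → ℝ) (hp0 : ∀ j, 0 < p j) (hpsum : ∑ j, p j = 1) (ρ : ℝ) :
    (∑ j, p j ^ (2 * ρ - 1) * (1 - p j))
        - ∑ x ∈ Finset.univ.offDiag, p x.1 ^ ρ * p x.2 ^ ρ
      = ∑ x ∈ Finset.univ.filter (fun x : Fin A × Fin A => x.1 < x.2),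
          p x.1 * p x.2 * (p x.1 ^ (ρ - 1) - p x.2 ^ (ρ - 1)) ^ 2 ∧
    (1 < ρ → (∃ j₁ j₂, p j₁ ≠ p j₂) →
      0 < ∑ x ∈ Finset.univ.filter (fun x : Fin A × Fin A => x.1 < x.2),
          p x.1 * p x.2 * (p x.1 ^ (ρ - 1) - p x.2 ^ (ρ - 1)) ^ 2) :=
  variance_coefficient_sum_of_squares_general p hp0 hpsum ρ
end

section
/- Let g_m denote the m-th moment of the standard normal distribution, i.e. g_m = m!/(2^{m/2} (m/2)!) if m is even and g_m = 0 if m is odd. Then for every integer N ≥ 1 and every integer ℓ ≥ 0, Σ_{k ∈ ℕ^N, k_1+…+k_N = ℓ} (ℓ choose k_1,…,k_N) · g_{k_1}···g_{k_N} = g_ℓ · N^{ℓ/2}. -/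
/-!
Only tuples with all entries even contribute, since odd Gaussian moments vanish; halving such a
tuple `k = 2m` with `∑ mᵢ = n`, the factorials combine as
`(2n choose 2m) ∏ g_{2mᵢ} = g_{2n} (n choose m)`, and the multinomial theorem gives
`∑_m (n choose m) = Nⁿ`.
-/

/-- `g_m`, the `m`-th moment of the standard normal distribution:
`m!/(2^{m/2}(m/2)!)` for even `m` and `0` for odd `m`. -/
noncomputable def gaussianMoment (m : ℕ) : ℝ :=
  if Even m then (m.factorial : ℝ) / (2 ^ (m / 2) * ((m / 2).factorial : ℝ)) else 0

open Finset Nat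

lemma gaussianMoment_of_odd {m : ℕ} (hm : Odd m) : gaussianMoment m = 0 :=
  if_neg (Nat.not_even_iff_odd.2 hm)

lemma gaussianMoment_two_mul (m : ℕ) :
    gaussianMoment (2 * m) = ((2 * m)! : ℝ) / (2 ^ m * (m ! : ℝ)) := by
  rw [gaussianMoment, if_pos (even_two_mul m), Nat.mul_div_cancel_left m two_pos]

lemma prod_gaussianMoment_eq_zero {ι : Type*} {s : Finset ι} {k : ι → ℕ}
    (hk : ∃ i ∈ s, Odd (k i)) : ∏ i ∈ s, gaussianMoment (k i) = 0 := by
  obtain ⟨i, hi, hodd⟩ := hk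
  exact prod_eq_zero hi (gaussianMoment_of_odd hodd)

lemma multinomial_two_nsmul_mul_prod_gaussianMoment {ι : Type*} (s : Finset ι) (m : ι → ℕ) :
    (multinomial s (2 • m) : ℝ) * ∏ i ∈ s, gaussianMoment ((2 • m) i) =
      gaussianMoment (2 * ∑ i ∈ s, m i) * multinomial s m := by
  have hspec₂ : (∏ i ∈ s, ((2 * m i)! : ℝ)) * multinomial s (2 • m) = (2 * ∑ i ∈ s, m i)! := by
    have := multinomial_spec s (2 • m)
    simp only [Pi.smul_apply, smul_eq_mul, ← mul_sum] at this
    exact_mod_cast this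
  have hspec : (∏ i ∈ s, ((m i)! : ℝ)) * multinomial s m = (∑ i ∈ s, m i)! := by
    exact_mod_cast multinomial_spec s m
  have hne : (multinomial s m : ℝ) ≠ 0 := cast_ne_zero.2 (multinomial_pos s m).ne'
  simp only [Pi.smul_apply, smul_eq_mul, gaussianMoment_two_mul, prod_div_distrib,
    prod_mul_distrib, prod_pow_eq_pow_sum]
  rw [← hspec₂, ← hspec]
  field_simp

section piAntidiag

variable {ι M : Type*} [DecidableEq ι] [AddCommMonoid M]

lemma Nat.sum_multinomial_piAntidiag (s : Finset ι) (n : ℕ) :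
    ∑ k ∈ piAntidiag s n, multinomial s k = #s ^ n := by
  simpa using (sum_pow_eq_sum_piAntidiag (R := ℕ) s (fun _ ↦ 1) n).symm

lemma exists_odd_of_mem_piAntidiag {s : Finset ι} {n : ℕ} {k : ι → ℕ} (hn : Odd n)
    (hk : k ∈ piAntidiag s n) : ∃ i ∈ s, Odd (k i) := by
  by_contra! h
  rw [mem_piAntidiag] at hk
  exact Nat.not_even_iff_odd.2 hn (hk.1 ▸ even_sum _ fun i hi ↦ Nat.not_odd_iff_even.1 (h i hi))

lemma sum_piAntidiag_two_mul {s : Finset ι} {f : (ι → ℕ) → M}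
    (hf : ∀ k, (∃ i ∈ s, Odd (k i)) → f k = 0) (n : ℕ) :
    ∑ k ∈ piAntidiag s (2 * n), f k = ∑ m ∈ piAntidiag s n, f (2 • m) := by
  rw [← sum_filter_of_ne (p := fun k ↦ ∀ i ∈ s, 2 ∣ k i), ← map_nsmul_piAntidiag s n two_ne_zero,
    sum_map]
  · rfl
  intro k _ hfk i hi
  by_contra h
  exact hfk (hf k ⟨i, hi, Nat.odd_iff.2 (Nat.two_dvd_ne_zero.1 h)⟩)

end piAntidiag

theorem gaussianMoment_multinomial_sum_general
    (N : ℕ) (ℓ : ℕ) :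
    ∑ k ∈ Finset.Nat.antidiagonalTuple N ℓ,
        (Nat.multinomial Finset.univ k : ℝ) * ∏ i, gaussianMoment (k i)
      = gaussianMoment ℓ * (N : ℝ) ^ ((ℓ : ℝ) / 2) := by
  have hvanish (k : Fin N → ℕ) (hk : ∃ i ∈ univ, Odd (k i)) :
      (multinomial univ k : ℝ) * ∏ i, gaussianMoment (k i) = 0 :=
    mul_eq_zero_of_right _ (prod_gaussianMoment_eq_zero hk)
  rw [← piAntidiag_univ_fin_eq_antidiagonalTuple]
  obtain ⟨n, rfl | rfl⟩ := Nat.even_or_odd' ℓ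
  · have hexp : ((2 * n : ℕ) : ℝ) / 2 = (n : ℕ) := by push_cast; ring
    rw [sum_piAntidiag_two_mul hvanish, hexp, Real.rpow_natCast]
    calc ∑ m ∈ piAntidiag univ n, (multinomial univ (2 • m) : ℝ) * ∏ i, gaussianMoment ((2 • m) i)
        = ∑ m ∈ piAntidiag univ n, gaussianMoment (2 * n) * multinomial univ m := by
          refine sum_congr rfl fun m hm ↦ ?_
          rw [multinomial_two_nsmul_mul_prod_gaussianMoment, (mem_piAntidiag.1 hm).1]
      _ = gaussianMoment (2 * n) * (N : ℝ) ^ n := by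
          rw [← mul_sum, ← Nat.cast_sum, Nat.sum_multinomial_piAntidiag, Finset.card_fin,
            Nat.cast_pow]
  · rw [gaussianMoment_of_odd (odd_two_mul_add_one n), zero_mul]
    exact sum_eq_zero fun k hk ↦ hvanish k (exists_odd_of_mem_piAntidiag (odd_two_mul_add_one n) hk)

/-- **Multinomial convolution identity for Gaussian moments**:
`∑_{k₁+⋯+k_N=ℓ} (ℓ choose k₁,…,k_N) g_{k₁}⋯g_{k_N} = g_ℓ · N^{ℓ/2}`
(the sum of `N` independent standard normals is `√N` times a standard normal). -/
theorem gaussianMoment_multinomial_sum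
    (N : ℕ) (hN : 1 ≤ N) (ℓ : ℕ) :
    ∑ k ∈ Finset.Nat.antidiagonalTuple N ℓ,
        (Nat.multinomial Finset.univ k : ℝ) * ∏ i, gaussianMoment (k i)
      = gaussianMoment ℓ * (N : ℝ) ^ ((ℓ : ℝ) / 2) :=
  gaussianMoment_multinomial_sum_general N ℓ
end
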